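/- arXiv:2303.00096 — 10 statements merged into one kernel-verified Lean document; each statement's English description precedes it below -/
import Mathlib

section
/- Let f : ℝⁿ → ℝ be continuously differentiable, let S be a closed set on which f attains value f*, and suppose f satisfies the Łojasiewicz inequality |f(x) - f*|^{2θ} ≤ (1/(2μ))‖∇f(x)‖² with θ ∈ [0,1) and μ > 0 on a neighborhood U of a local minimum x̄ ∈ S, and f(x) ≥ f* on U. If x : [0,T] → ℝⁿ solves the negative gradient flow x'(t) = -∇f(x(t)) with x(t) ∈ U and ∇f(x(t)) ≠ 0 for all t ∈ (0,T), then the path length satisfies ∫₀ᵀ ‖x'(t)‖ dt ≤ (1/((1-θ)√(2μ))) |f(x(0)) - f*|^{1-θ}. -/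
open Metric Filter Topology Set

/-!
Along the flow, `g t = f (x t) - f xb` satisfies `g' = -‖∇f (x t)‖²`, so it is strictly
decreasing and hence positive on `(0, T)`. There the Łojasiewicz inequality reads
`√(2μ) g^θ ≤ ‖∇f‖`, which says exactly that `φ s = s^(1-θ) / ((1-θ)√(2μ))`
satisfies `-(φ ∘ g)' = φ'(g) ‖∇f‖² ≥ ‖∇f‖`. Integrating, the path length is at most
`φ (g 0) - φ (g T) ≤ φ (g 0)`.
-/

section GradientFlow

variable {E : Type*} [NormedAddCommGroup E] [InnerProductSpace ℝ E] [CompleteSpace E]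

theorem ContDiff.continuous_gradient {f : E → ℝ} (hf : ContDiff ℝ 1 f) :
    Continuous (gradient f) :=
  (InnerProductSpace.toDual ℝ E).symm.continuous.comp (hf.continuous_fderiv one_ne_zero)

theorem hasDerivAt_comp_of_hasDerivAt_neg_gradient {f : E → ℝ} {x : ℝ → E} {t : ℝ}
    (hf : DifferentiableAt ℝ f (x t)) (hx : HasDerivAt x (-gradient f (x t)) t) :
    HasDerivAt (fun s => f (x s)) (-‖gradient f (x t)‖ ^ 2) t := by
  have := hf.hasGradientAt.hasFDerivAt.comp_hasDerivAt t hx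
  rwa [InnerProductSpace.toDual_apply_apply, inner_neg_right,
    real_inner_self_eq_norm_sq] at this

end GradientFlow

theorem pos_of_strictAntiOn_Ioo {g : ℝ → ℝ} {a b t : ℝ} (hg : StrictAntiOn g (Ioo a b))
    (hnn : ∀ s ∈ Ioo a b, 0 ≤ g s) (ht : t ∈ Ioo a b) : 0 < g t := by
  obtain ⟨s, hts, hsb⟩ := exists_between ht.2
  have hs : s ∈ Ioo a b := ⟨ht.1.trans hts, hsb⟩
  exact (hnn s hs).trans_lt (hg ht hs hts)

theorem le_rpow_neg_div_sqrt_mul_sq_of_rpow_le {θ μ y G : ℝ} (hμ : 0 < μ) (hy : 0 < y)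
    (hG : 0 < G) (h : y ^ (2 * θ) ≤ 1 / (2 * μ) * G ^ 2) :
    G ≤ y ^ (-θ) / √(2 * μ) * G ^ 2 := by
  have hsqrt : 0 < √(2 * μ) := Real.sqrt_pos.2 (by positivity)
  have hsq : (√(2 * μ) * y ^ θ) ^ 2 ≤ G ^ 2 := by
    rw [mul_pow, Real.sq_sqrt (by positivity), ← Real.rpow_natCast, ← Real.rpow_mul hy.le]
    calc 2 * μ * y ^ (θ * (2 : ℕ)) = 2 * μ * y ^ (2 * θ) := by ring_nf
      _ ≤ 2 * μ * (1 / (2 * μ) * G ^ 2) := by gcongr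
      _ = G ^ 2 := by field_simp
  have hle : √(2 * μ) * y ^ θ ≤ G :=
    (pow_le_pow_iff_left₀ (by positivity) hG.le two_ne_zero).1 hsq
  rw [Real.rpow_neg hy.le, div_mul_eq_mul_div, le_div_iff₀ hsqrt]
  calc G * √(2 * μ) = (y ^ θ)⁻¹ * (G * (√(2 * μ) * y ^ θ)) := by field_simp
    _ ≤ (y ^ θ)⁻¹ * G ^ 2 := by gcongr; nlinarith

theorem integral_le_of_hasDerivAt_neg_sq_of_rpow_le {g G : ℝ → ℝ} {a b θ μ : ℝ}
    (hab : a < b) (hθ : θ < 1) (hμ : 0 < μ) (hg : ContinuousOn g (Icc a b))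
    (hG : ContinuousOn G (Icc a b))
    (hderiv : ∀ t ∈ Ioo a b, HasDerivAt g (-G t ^ 2) t) (hGpos : ∀ t ∈ Ioo a b, 0 < G t)
    (hgnn : ∀ t ∈ Ioo a b, 0 ≤ g t)
    (hloja : ∀ t ∈ Ioo a b, g t ^ (2 * θ) ≤ 1 / (2 * μ) * G t ^ 2) :
    ∫ t in a..b, G t ≤ 1 / ((1 - θ) * √(2 * μ)) * g a ^ (1 - θ) := by
  set c := 1 / ((1 - θ) * √(2 * μ)) with hc
  have hθ' : 0 < 1 - θ := sub_pos.2 hθ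
  have hsqrt : 0 < √(2 * μ) := Real.sqrt_pos.2 (by positivity)
  have hanti : StrictAntiOn g (Icc a b) := by
    refine strictAntiOn_of_hasDerivWithinAt_neg (f' := fun t => -G t ^ 2) (convex_Icc a b) hg
      ?_ ?_ <;>
      rw [interior_Icc] <;> intro t ht
    · exact (hderiv t ht).hasDerivWithinAt
    · exact neg_neg_of_pos (pow_pos (hGpos t ht) 2)
  have hgpos : ∀ t ∈ Ioo a b, 0 < g t := fun t ht =>
    pos_of_strictAntiOn_Ioo (hanti.mono Ioo_subset_Icc_self) hgnn ht
  have hgb : 0 ≤ g b :=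
    ContinuousWithinAt.closure_le (by rw [closure_Ioo hab.ne]; exact right_mem_Icc.2 hab.le)
      continuousWithinAt_const ((hg b (right_mem_Icc.2 hab.le)).mono Ioo_subset_Icc_self) hgnn
  have hφ : ∀ t ∈ Ioo a b, HasDerivAt (fun s => -(c * g s ^ (1 - θ)))
      (g t ^ (-θ) / √(2 * μ) * G t ^ 2) t := by
    intro t ht
    refine (((Real.hasDerivAt_rpow_const (Or.inl (hgpos t ht).ne')).comp t
      (hderiv t ht)).const_mul c).neg.congr_deriv ?_
    rw [hc, sub_sub_cancel_left]
    field_simp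
  have hφcont : ContinuousOn (fun s => -(c * g s ^ (1 - θ))) (Icc a b) :=
    (continuousOn_const.mul (hg.rpow_const fun _ _ => Or.inr hθ'.le)).neg
  have hFTC := intervalIntegral.integral_le_sub_of_hasDeriv_right_of_le hab.le hφcont
    (fun t ht => (hφ t ht).hasDerivWithinAt) hG.integrableOn_Icc
    fun t ht => le_rpow_neg_div_sqrt_mul_sq_of_rpow_le hμ (hgpos t ht) (hGpos t ht) (hloja t ht)
  have hφb : 0 ≤ c * g b ^ (1 - θ) := by positivity
  linarith

theorem loja_gradient_flow_path_length_general {n : ℕ}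
    (f : EuclideanSpace ℝ (Fin n) → ℝ) (xb : EuclideanSpace ℝ (Fin n))
    (hf : ContDiff ℝ 1 f)
    (θ μ : ℝ) (hθ1 : θ < 1) (hμ : 0 < μ)
    (U : Set (EuclideanSpace ℝ (Fin n)))
    (hLoja : ∀ x ∈ U, |f x - f xb| ^ (2 * θ) ≤ (1 / (2 * μ)) * ‖gradient f x‖ ^ 2)
    (hge : ∀ x ∈ U, f xb ≤ f x)
    (T : ℝ) (hT : 0 < T) (x : ℝ → EuclideanSpace ℝ (Fin n))
    (hx0 : x 0 ∈ U)
    (hflow : ∀ t ∈ Set.Icc (0 : ℝ) T, HasDerivAt x (-(gradient f (x t))) t)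
    (hin : ∀ t ∈ Set.Ioo (0 : ℝ) T, x t ∈ U)
    (hne : ∀ t ∈ Set.Ioo (0 : ℝ) T, gradient f (x t) ≠ 0) :
    ∫ t in (0 : ℝ)..T, ‖gradient f (x t)‖ ≤
      (1 / ((1 - θ) * Real.sqrt (2 * μ))) * |f (x 0) - f xb| ^ (1 - θ) := by
  have hx : ContinuousOn x (Icc 0 T) := fun t ht => (hflow t ht).continuousAt.continuousWithinAt
  have hgap : ∀ y ∈ U, 0 ≤ f y - f xb := fun y hy => sub_nonneg.2 (hge y hy)
  rw [abs_of_nonneg (hgap _ hx0)]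
  refine integral_le_of_hasDerivAt_neg_sq_of_rpow_le (g := fun t => f (x t) - f xb) hT hθ1 hμ
    ((hf.continuous.comp_continuousOn hx).sub continuousOn_const)
    (hf.continuous_gradient.comp_continuousOn hx).norm (fun t ht => ?_)
    (fun t ht => norm_pos_iff.2 (hne t ht)) (fun t ht => hgap _ (hin t ht)) (fun t ht => ?_)
  · exact (hasDerivAt_comp_of_hasDerivAt_neg_gradient ((hf.differentiable one_ne_zero) _)
      (hflow t (Ioo_subset_Icc_self ht))).sub_const _
  · simpa only [abs_of_nonneg (hgap _ (hin t ht))] using hLoja (x t) (hin t ht)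

/-- Bounded path length of gradient flow trajectories under the Łojasiewicz inequality. -/
theorem loja_gradient_flow_path_length {n : ℕ}
    (f : EuclideanSpace ℝ (Fin n) → ℝ) (xb : EuclideanSpace ℝ (Fin n))
    (hf : ContDiff ℝ 1 f) (hmin : IsLocalMin f xb)
    (θ μ : ℝ) (hθ0 : 0 ≤ θ) (hθ1 : θ < 1) (hμ : 0 < μ)
    (U : Set (EuclideanSpace ℝ (Fin n))) (hU : U ∈ 𝓝 xb)
    (hLoja : ∀ x ∈ U, |f x - f xb| ^ (2 * θ) ≤ (1 / (2 * μ)) * ‖gradient f x‖ ^ 2)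
    (hge : ∀ x ∈ U, f xb ≤ f x)
    (T : ℝ) (hT : 0 < T) (x : ℝ → EuclideanSpace ℝ (Fin n))
    (hx0 : x 0 ∈ U)
    (hflow : ∀ t ∈ Set.Icc (0 : ℝ) T, HasDerivAt x (-(gradient f (x t))) t)
    (hin : ∀ t ∈ Set.Ioo (0 : ℝ) T, x t ∈ U)
    (hne : ∀ t ∈ Set.Ioo (0 : ℝ) T, gradient f (x t) ≠ 0) :
    ∫ t in (0 : ℝ)..T, ‖gradient f (x t)‖ ≤
      (1 / ((1 - θ) * Real.sqrt (2 * μ))) * |f (x 0) - f xb| ^ (1 - θ) :=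
  loja_gradient_flow_path_length_general f xb hf θ μ hθ1 hμ U hLoja hge T hT x hx0 hflow hin hne
end

section
/- Let f : ℝⁿ → ℝ be C¹ and satisfy, on a neighborhood of a local minimum x̄ with minimum value f*, the Polyak–Łojasiewicz inequality f(x) - f* ≤ (1/(2μ))‖∇f(x)‖² for some μ > 0. Then f satisfies quadratic growth with the same constant near x̄: f(x) - f* ≥ (μ/2) dist(x, S)² for all x sufficiently close to x̄, where S is the set of local minima with value f*. -/
/-!
Put `h = √(f - f*)`. Near `x̄` the PL inequality says that wherever `f > f*`, the gradient of `h`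
has norm at least `√(μ/2)`. Fix `ε < √(μ/2)` and minimize `h + ε · dist(·, x)` over a small ball
around `x`: a minimizer `y` lies in the interior, so `h` decreases by at most `ε` per unit length
near `y`, which forces `f y = f*`; hence `y ∈ S` and `ε · dist(x, S) ≤ ε · dist(x, y) ≤ h x`.
Letting `ε → √(μ/2)` and squaring gives quadratic growth.
-/

open Metric Filter Topology

theorem HasFDerivAt.norm_le_of_eventually_le_add_mul_norm {E : Type*} [NormedAddCommGroup E]
    [NormedSpace ℝ E] {g : E → ℝ} {L : E →L[ℝ] ℝ} {y : E} {ε : ℝ} (hg : HasFDerivAt g L y)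
    (hε : 0 ≤ ε) (h : ∀ᶠ z in 𝓝 y, g y ≤ g z + ε * ‖z - y‖) : ‖L‖ ≤ ε := by
  refine le_of_forall_pos_le_add fun δ hδ =>
    ContinuousLinearMap.opNorm_le_of_nhds_zero (by positivity) ?_
  rw [← map_add_left_nhds_zero y, eventually_map] at h
  have hlower : ∀ᶠ w in 𝓝 (0 : E), -L w ≤ (ε + δ) * ‖w‖ := by
    filter_upwards [h, Asymptotics.isLittleO_iff.1 (hasFDerivAt_iff_isLittleO_nhds_zero.1 hg) hδ]
      with w hw hwo
    rw [add_sub_cancel_left] at hw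
    rw [Real.norm_eq_abs, abs_le] at hwo
    linarith [hwo.1]
  have hupper : ∀ᶠ w in 𝓝 (0 : E), -L (-w) ≤ (ε + δ) * ‖-w‖ :=
    (continuous_neg.tendsto' 0 0 neg_zero).eventually hlower
  filter_upwards [hlower, hupper] with w hw hw'
  rw [map_neg, neg_neg, norm_neg] at hw'
  rw [Real.norm_eq_abs, abs_le]
  constructor <;> linarith

/-- A compactness substitute for Ekeland's variational principle. -/
theorem exists_dist_lt_and_eventually_le_add_mul_dist {X : Type*} [PseudoMetricSpace X]
    [ProperSpace X] {g : X → ℝ} {x : X} {ε ρ : ℝ} (hg : ContinuousOn g (closedBall x ρ))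
    (hg0 : ∀ z, 0 ≤ g z) (hε : 0 < ε) (hx : g x < ε * ρ) :
    ∃ y, dist y x < ρ ∧ ε * dist y x ≤ g x ∧ ∀ᶠ z in 𝓝 y, g y ≤ g z + ε * dist z y := by
  have hρ : 0 ≤ ρ := (pos_of_mul_pos_right ((hg0 x).trans_lt hx) hε.le).le
  obtain ⟨y, -, hymin⟩ := (isCompact_closedBall x ρ).exists_isMinOn (nonempty_closedBall.2 hρ)
    (f := fun z => g z + ε * dist z x)
    (hg.add (continuousOn_const.mul (continuous_id.dist continuous_const).continuousOn))
  have hyx : ε * dist y x ≤ g x := by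
    have := hymin (mem_closedBall_self hρ)
    simp only [Set.mem_ofPred_eq, dist_self, mul_zero, add_zero] at this
    linarith [hg0 y]
  have hyρ : dist y x < ρ := lt_of_mul_lt_mul_left (hyx.trans_lt hx) hε.le
  refine ⟨y, hyρ, hyx, ?_⟩
  filter_upwards [hymin.isLocalMin (closedBall_mem_nhds_of_mem hyρ)] with z hz
  have := dist_triangle z y x
  nlinarith

section PL

variable {E : Type*} [NormedAddCommGroup E] [InnerProductSpace ℝ E] [CompleteSpace E]

theorem half_le_sq_of_pl_of_eventually_sqrt_le {f : E → ℝ} {y : E} {c μ ε : ℝ} (hμ : 0 < μ)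
    (hε : 0 ≤ ε) (hf : DifferentiableAt ℝ f y) (hc : c < f y)
    (hPL : f y - c ≤ 1 / (2 * μ) * ‖gradient f y‖ ^ 2)
    (h : ∀ᶠ z in 𝓝 y, √(f y - c) ≤ √(f z - c) + ε * ‖z - y‖) : μ / 2 ≤ ε ^ 2 := by
  have hs : 0 < f y - c := sub_pos.2 hc
  have hL := ((hf.hasFDerivAt.sub_const c).sqrt hs.ne').norm_le_of_eventually_le_add_mul_norm hε h
  rw [norm_smul, Real.norm_of_nonneg (by positivity), one_div, inv_mul_le_iff₀ (by positivity)]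
    at hL
  have hgrad : ‖gradient f y‖ = ‖fderiv ℝ f y‖ := by simp [gradient]
  rw [hgrad, one_div, inv_mul_eq_div, le_div_iff₀ (by positivity)] at hPL
  have hsq := Real.sq_sqrt hs.le
  nlinarith [pow_le_pow_left₀ (norm_nonneg _) hL 2]

variable [ProperSpace E]

theorem mul_infDist_le_sqrt_of_pl {f : E → ℝ} {x₀ x : E} {c μ r ε : ℝ} (hμ : 0 < μ)
    (hf : DifferentiableOn ℝ f (ball x₀ r)) (hc : ∀ z ∈ ball x₀ r, c ≤ f z)
    (hPL : ∀ z ∈ ball x₀ r, f z - c ≤ 1 / (2 * μ) * ‖gradient f z‖ ^ 2)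
    (hx : dist x x₀ < r / 2) (hε : 0 < ε) (hεμ : ε ^ 2 < μ / 2)
    (hfx : √(f x - c) < ε * (r / 2)) :
    ε * infDist x {y | IsLocalMin f y ∧ f y = c} ≤ √(f x - c) := by
  have hball : closedBall x (r / 2) ⊆ ball x₀ r := closedBall_subset_ball' (by linarith)
  obtain ⟨y, hyx, hεyx, hy⟩ := exists_dist_lt_and_eventually_le_add_mul_dist
    ((hf.continuousOn.mono hball).sub continuousOn_const).sqrt (fun _ => Real.sqrt_nonneg _) hε hfx
  have hyball : y ∈ ball x₀ r := hball (mem_closedBall.2 hyx.le)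
  have hfy : f y = c := by
    by_contra hne
    refine hεμ.not_ge (half_le_sq_of_pl_of_eventually_sqrt_le hμ hε.le
      (hf.differentiableAt (isOpen_ball.mem_nhds hyball)) ((hc y hyball).lt_of_ne' hne)
      (hPL y hyball) ?_)
    simpa only [dist_eq_norm, Pi.sub_apply] using hy
  have hyS : IsLocalMin f y ∧ f y = c := by
    refine ⟨?_, hfy⟩
    filter_upwards [isOpen_ball.mem_nhds hyball] with z hz
    exact hfy ▸ hc z hz
  calc ε * infDist x {y | IsLocalMin f y ∧ f y = c} ≤ ε * dist y x := by
        rw [dist_comm]; exact mul_le_mul_of_nonneg_left (infDist_le_dist_of_mem hyS) hε.le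
    _ ≤ √(f x - c) := hεyx

theorem qg_of_pl {f : E → ℝ} {x₀ x : E} {c μ r : ℝ} (hμ : 0 < μ)
    (hf : DifferentiableOn ℝ f (ball x₀ r)) (hc : ∀ z ∈ ball x₀ r, c ≤ f z)
    (hPL : ∀ z ∈ ball x₀ r, f z - c ≤ 1 / (2 * μ) * ‖gradient f z‖ ^ 2)
    (hx : dist x x₀ < r / 2) (hfx : √(f x - c) < √(μ / 2) / 2 * (r / 2)) :
    μ / 2 * infDist x {y | IsLocalMin f y ∧ f y = c} ^ 2 ≤ f x - c := by
  set a := √(μ / 2)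
  have ha : 0 < a := Real.sqrt_pos.2 (by positivity)
  have hr : 0 < r := by linarith [dist_nonneg (x := x) (y := x₀)]
  have haD : a * infDist x {y | IsLocalMin f y ∧ f y = c} ≤ √(f x - c) := by
    refine le_of_tendsto (((continuous_mul_const _).tendsto a).mono_left
      (nhdsWithin_le_nhds (s := Set.Iio a))) ?_
    filter_upwards [Ioo_mem_nhdsLT (half_lt_self ha)] with ε ⟨hε, hεa⟩
    have hε0 : 0 < ε := (half_pos ha).trans hε
    refine mul_infDist_le_sqrt_of_pl hμ hf hc hPL hx hε0 ?_ (hfx.trans_le (by gcongr))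
    calc ε ^ 2 < a ^ 2 := by gcongr
      _ = μ / 2 := Real.sq_sqrt (by positivity)
  have hxball : x ∈ ball x₀ r := mem_ball.2 (by linarith)
  calc μ / 2 * infDist x {y | IsLocalMin f y ∧ f y = c} ^ 2
      = (a * infDist x {y | IsLocalMin f y ∧ f y = c}) ^ 2 := by
        rw [mul_pow, Real.sq_sqrt (by positivity)]
    _ ≤ √(f x - c) ^ 2 := pow_le_pow_left₀ (mul_nonneg ha.le infDist_nonneg) haD 2
    _ = f x - c := Real.sq_sqrt (sub_nonneg.2 (hc x hxball))

end PL

/-- PL implies quadratic growth with the same constant, for C¹ functions. -/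
theorem pl_implies_qg {n : ℕ}
    (f : EuclideanSpace ℝ (Fin n) → ℝ) (xb : EuclideanSpace ℝ (Fin n))
    (hf : ContDiff ℝ 1 f) (hmin : IsLocalMin f xb)
    (μ : ℝ) (hμ : 0 < μ)
    (hPL : ∀ᶠ x in 𝓝 xb, f x - f xb ≤ (1 / (2 * μ)) * ‖gradient f x‖ ^ 2) :
    ∀ᶠ x in 𝓝 xb,
      (μ / 2) * (Metric.infDist x {y | IsLocalMin f y ∧ f y = f xb}) ^ 2 ≤ f x - f xb := by
  obtain ⟨r, hr, hball⟩ := Metric.eventually_nhds_iff_ball.1 (hPL.and hmin)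
  have hsqrt : Continuous fun x => √(f x - f xb) := (hf.continuous.sub continuous_const).sqrt
  have hsmall : ∀ᶠ x in 𝓝 xb, √(f x - f xb) < √(μ / 2) / 2 * (r / 2) :=
    hsqrt.continuousAt.eventually_lt continuousAt_const (by simp [hr, hμ])
  filter_upwards [ball_mem_nhds xb (half_pos hr), hsmall] with x hx hfx
  exact qg_of_pl hμ (hf.differentiable one_ne_zero).differentiableOn (fun z hz => (hball z hz).2)
    (fun z hz => (hball z hz).1) hx hfx
end

section
/- Let f : ℝⁿ → ℝ be twice continuously differentiable and let x̄ be a local minimum with value f* and solution set S. Suppose S is a C¹ embedded submanifold near x̄, ker ∇²f(x̄) = T_{x̄}S, and ⟨v, ∇²f(x̄)v⟩ ≥ μ‖v‖² for all v in the normal space N_{x̄}S (the Morse–Bott property with constant μ). Then for every μ' < μ, the quadratic growth inequality f(x) - f* ≥ (μ'/2) dist(x, S)² holds for all x in some neighborhood of x̄. -/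
open Metric Filter Topology
open scoped RealInnerProductSpace

/-!
The implicit function theorem, with the orthogonal projection onto `T = ker Dφ(xb)` as the
transverse coordinate, gives for every `x` near `xb` a point `y ∈ S` near `xb` with
`x - y ∈ Tᗮ`. As `y` is a local minimum, `∇f y = 0`, and on a small ball around `xb` the Hessian
stays within `μ - μ'` of `∇²f(xb)` in operator norm, so it is `μ'`-positive in the direction
`x - y`. Taylor's formula along the segment from `y` to `x` then gives
`f x - f xb ≥ (μ'/2) ‖x - y‖² ≥ (μ'/2) dist(x, S)²`.
-/

open InnerProductSpace

theorem add_half_le_of_hasDerivAt_of_le_deriv2 {g g' g'' : ℝ → ℝ} {m : ℝ}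
    (hg : ∀ t, HasDerivAt g (g' t) t) (hg' : ∀ t, HasDerivAt g' (g'' t) t) (h0 : g' 0 = 0)
    (hm : ∀ t ∈ Set.Icc (0 : ℝ) 1, m ≤ g'' t) :
    g 0 + m / 2 ≤ g 1 := by
  have hd₁ : ∀ t, HasDerivAt (fun t => g' t - m * t) (g'' t - m) t := fun t =>
    ((hg' t).sub ((hasDerivAt_id t).const_mul m)).congr_deriv (by ring)
  have hd₂ : ∀ t, HasDerivAt (fun t => g t - m * t ^ 2 / 2) (g' t - m * t) t := fun t =>
    ((hg t).sub (((hasDerivAt_pow 2 t).const_mul m).div_const 2)).congr_deriv (by ring)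
  have hmono₁ : MonotoneOn (fun t => g' t - m * t) (Set.Icc 0 1) :=
    monotoneOn_of_hasDerivWithinAt_nonneg (convex_Icc 0 1)
      (fun t _ => (hd₁ t).continuousAt.continuousWithinAt) (fun t _ => (hd₁ t).hasDerivWithinAt)
      (fun t ht => sub_nonneg.2 (hm t (interior_subset ht)))
  have hslope : ∀ t ∈ Set.Icc (0 : ℝ) 1, 0 ≤ g' t - m * t := fun t ht => by
    simpa [h0] using hmono₁ (Set.left_mem_Icc.2 zero_le_one) ht ht.1
  have hmono₂ : MonotoneOn (fun t => g t - m * t ^ 2 / 2) (Set.Icc 0 1) :=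
    monotoneOn_of_hasDerivWithinAt_nonneg (convex_Icc 0 1)
      (fun t _ => (hd₂ t).continuousAt.continuousWithinAt) (fun t _ => (hd₂ t).hasDerivWithinAt)
      (fun t ht => hslope t (interior_subset ht))
  have := hmono₂ (Set.left_mem_Icc.2 zero_le_one) (Set.right_mem_Icc.2 zero_le_one) zero_le_one
  norm_num at this
  linarith

section InnerProductSpace

variable {E : Type*} [NormedAddCommGroup E] [InnerProductSpace ℝ E]

theorem sub_mul_norm_sq_le_inner_apply_of_norm_sub_le {A B : E →L[ℝ] E} {μ ε : ℝ} {v : E}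
    (hAB : ‖B - A‖ ≤ ε) (hA : μ * ‖v‖ ^ 2 ≤ ⟪v, A v⟫) :
    (μ - ε) * ‖v‖ ^ 2 ≤ ⟪v, B v⟫ := by
  have hpert : |⟪v, (B - A) v⟫| ≤ ε * ‖v‖ ^ 2 :=
    calc |⟪v, (B - A) v⟫| ≤ ‖v‖ * ‖(B - A) v‖ := abs_real_inner_le_norm _ _
      _ ≤ ‖v‖ * (ε * ‖v‖) := by gcongr; exact (B - A).le_of_opNorm_le hAB v
      _ = ε * ‖v‖ ^ 2 := by ring
  have hsplit : ⟪v, B v⟫ = ⟪v, A v⟫ + ⟪v, (B - A) v⟫ := by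
    rw [sub_apply, inner_sub_right]; ring
  linarith [neg_abs_le ⟪v, (B - A) v⟫]

variable [CompleteSpace E]

theorem ContDiff.gradient {f : E → ℝ} {m n : WithTop ℕ∞} (hf : ContDiff ℝ n f)
    (hmn : m + 1 ≤ n) :
    ContDiff ℝ m (gradient f) :=
  (toDual ℝ E).symm.contDiff.comp (hf.fderiv_right hmn)

theorem IsLocalMin.gradient_eq_zero {f : E → ℝ} {p : E} (h : IsLocalMin f p) :
    gradient f p = 0 := by
  simp [gradient, h.fderiv_eq_zero]

theorem add_half_le_of_gradient_eq_zero {f : E → ℝ} (hf : ContDiff ℝ 2 f) {p v : E} {m : ℝ}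
    (hp : gradient f p = 0)
    (hm : ∀ t ∈ Set.Icc (0 : ℝ) 1, m ≤ ⟪v, fderiv ℝ (gradient f) (p + t • v) v⟫) :
    f p + m / 2 ≤ f (p + v) := by
  have hgrad : ContDiff ℝ 1 (gradient f) := hf.gradient (by norm_num)
  have hline : ∀ t : ℝ, HasDerivAt (fun s : ℝ => p + s • v) v t := fun t => by
    simpa using ((hasDerivAt_id t).smul_const v).const_add p
  have hd₁ : ∀ t : ℝ, HasDerivAt (fun s => f (p + s • v)) ⟪v, gradient f (p + t • v)⟫ t := by
    intro t
    have := ((hf.differentiable (by norm_num) _).hasGradientAt.hasFDerivAt).comp_hasDerivAt t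
      (hline t)
    simpa [toDual_apply_apply, Function.comp_def, real_inner_comm] using this
  have hd₂ : ∀ t : ℝ, HasDerivAt (fun s => ⟪v, gradient f (p + s • v)⟫)
      ⟪v, fderiv ℝ (gradient f) (p + t • v) v⟫ t := fun t => by
    simpa using (hasDerivAt_const t v).inner ℝ
      (((hgrad.differentiable one_ne_zero _).hasFDerivAt).comp_hasDerivAt t (hline t))
  simpa using add_half_le_of_hasDerivAt_of_le_deriv2 hd₁ hd₂ (by simp [hp]) hm

theorem add_half_mul_norm_sq_le_of_gradient_eq_zero {f : E → ℝ} (hf : ContDiff ℝ 2 f)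
    {s : Set E} (hs : Convex ℝ s) {p x : E} (hp : p ∈ s) (hx : x ∈ s) (hgrad : gradient f p = 0)
    {H : E →L[ℝ] E} {μ ε : ℝ} (hH : ∀ z ∈ s, ‖fderiv ℝ (gradient f) z - H‖ ≤ ε)
    (hμ : μ * ‖x - p‖ ^ 2 ≤ ⟪x - p, H (x - p)⟫) :
    f p + (μ - ε) / 2 * ‖x - p‖ ^ 2 ≤ f x := by
  have := add_half_le_of_gradient_eq_zero hf hgrad fun t ht =>
    sub_mul_norm_sq_le_inner_apply_of_norm_sub_le (hH _ (hs.add_smul_sub_mem hp hx ht)) hμ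
  rw [add_sub_cancel] at this
  linarith

end InnerProductSpace

section ImplicitFunction

variable {E F : Type*} [NormedAddCommGroup E] [InnerProductSpace ℝ E] [CompleteSpace E]
  [NormedAddCommGroup F] [NormedSpace ℝ F] [CompleteSpace F]

theorem HasStrictFDerivAt.eventually_exists_mem_sub_mem_orthogonal_ker {φ : E → F}
    {φ' : E →L[ℝ] F} {a : E} (hφ : HasStrictFDerivAt φ φ' a) (hsurj : Function.Surjective φ')
    {V : Set E} (hV : V ∈ 𝓝 a) :
    ∀ᶠ x in 𝓝 a, ∃ y ∈ V, φ y = φ a ∧ x - y ∈ (LinearMap.ker (φ' : E →ₗ[ℝ] F))ᗮ := by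
  have : CompleteSpace (LinearMap.ker (φ' : E →ₗ[ℝ] F)) := φ'.isClosed_ker.completeSpace_coe
  set K := LinearMap.ker (φ' : E →ₗ[ℝ] F)
  set P := K.orthogonalProjectionOnto
  let data : ImplicitFunctionData ℝ E F K :=
    { leftFun := φ
      leftDeriv := φ'
      rightFun := fun x => P (x - a)
      rightDeriv := P
      pt := a
      hasStrictFDerivAt_leftFun := hφ
      hasStrictFDerivAt_rightFun :=
        P.hasStrictFDerivAt.comp a ((hasStrictFDerivAt_id a).sub_const a)
      range_leftDeriv := LinearMap.range_eq_top.2 hsurj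
      range_rightDeriv := K.range_projectionOntoL _
      isCompl_ker := by
        rw [Submodule.ker_orthogonalProjectionOnto]
        exact Submodule.isCompl_orthogonal K }
  -- `data.implicitFunction (φ a) (P (x - a))` is the point of the level set `φ = φ a` whose
  -- projection onto `K` agrees with that of `x`.
  have htendsto : Tendsto (fun x => data.implicitFunction (φ a) (P (x - a))) (𝓝 a) (𝓝 a) :=
    (data.toOpenPartialHomeomorph.tendsto_symm data.pt_mem_toOpenPartialHomeomorph_source).comp
      ((continuous_const.prodMk (P.continuous.comp (continuous_sub_right a))).tendsto a)
  filter_upwards [data.leftFun_implicitFunction_eq_leftFun,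
    data.rightFun_implicitFunction_eq_rightFun, htendsto hV] with x hleft hright hmem
  refine ⟨_, hmem, hleft, ?_⟩
  rw [← Submodule.ker_orthogonalProjectionOnto, LinearMap.mem_ker,
    ← sub_sub_sub_cancel_right x _ a, map_sub]
  exact sub_eq_zero.2 hright.symm

end ImplicitFunction

theorem mb_implies_qg_general {n d : ℕ}
    (f : EuclideanSpace ℝ (Fin n) → ℝ) (xb : EuclideanSpace ℝ (Fin n))
    (hf : ContDiff ℝ 2 f) (hmin : IsLocalMin f xb)
    (μ : ℝ)
    (S : Set (EuclideanSpace ℝ (Fin n)))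
    (hS : S = {y | IsLocalMin f y ∧ f y = f xb})
    (U : Set (EuclideanSpace ℝ (Fin n))) (hUopen : IsOpen U) (hxU : xb ∈ U)
    (φ : EuclideanSpace ℝ (Fin n) → EuclideanSpace ℝ (Fin d))
    (hφ : ContDiffOn ℝ 1 φ U)
    (hsurj : ∀ x ∈ U, Function.Surjective (fderiv ℝ φ x))
    (hdef : S ∩ U = {x ∈ U | φ x = 0})
    (T : Submodule ℝ (EuclideanSpace ℝ (Fin n)))
    (hT : T = LinearMap.ker (fderiv ℝ φ xb :
        EuclideanSpace ℝ (Fin n) →ₗ[ℝ] EuclideanSpace ℝ (Fin d)))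
    (hpos : ∀ v ∈ Tᗮ, μ * ‖v‖ ^ 2 ≤ ⟪v, fderiv ℝ (gradient f) xb v⟫) :
    ∀ μ' < μ, ∀ᶠ x in 𝓝 xb, (μ' / 2) * (Metric.infDist x S) ^ 2 ≤ f x - f xb := by
  intro μ' hμ'
  rcases le_or_gt μ' 0 with hμ'0 | hμ'0
  · filter_upwards [hmin] with x hx
    nlinarith [sq_nonneg (infDist x S)]
  have hφxb : φ xb = 0 := (hdef ▸ ⟨hS ▸ ⟨hmin, rfl⟩, hxU⟩ : xb ∈ {x ∈ U | φ x = 0}).2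
  obtain ⟨δ, hδ, hHess⟩ : ∃ δ > 0, ∀ z ∈ ball xb δ,
      ‖fderiv ℝ (gradient f) z - fderiv ℝ (gradient f) xb‖ ≤ μ - μ' := by
    have hcont := (hf.gradient (m := 1) (by norm_num)).continuous_fderiv one_ne_zero
    obtain ⟨δ, hδ, hball⟩ := Metric.mem_nhds_iff.1 <|
      hcont.continuousAt.preimage_mem_nhds (closedBall_mem_nhds _ (sub_pos.2 hμ'))
    exact ⟨δ, hδ, fun z hz => by simpa [dist_eq_norm] using hball hz⟩
  have hφ' : HasStrictFDerivAt φ (fderiv ℝ φ xb) xb :=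
    (hφ.contDiffAt (hUopen.mem_nhds hxU)).hasStrictFDerivAt one_ne_zero
  filter_upwards [hφ'.eventually_exists_mem_sub_mem_orthogonal_ker (hsurj xb hxU)
      (inter_mem (ball_mem_nhds xb hδ) (hUopen.mem_nhds hxU)), ball_mem_nhds xb hδ]
    with x ⟨y, ⟨hyδ, hyU⟩, hφy, hxy⟩ hxδ
  have hyS : y ∈ S := (hdef.symm ▸ ⟨hyU, hφy.trans hφxb⟩ : y ∈ S ∩ U).1
  obtain ⟨hymin, hfy⟩ : IsLocalMin f y ∧ f y = f xb := by rwa [hS] at hyS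
  have hgrowth := add_half_mul_norm_sq_le_of_gradient_eq_zero hf (convex_ball xb δ) hyδ hxδ
    hymin.gradient_eq_zero hHess (hpos _ (hT ▸ hxy))
  rw [sub_sub_cancel, hfy] at hgrowth
  calc μ' / 2 * infDist x S ^ 2 ≤ μ' / 2 * ‖x - y‖ ^ 2 := by
        gcongr
        · exact infDist_nonneg
        · exact dist_eq_norm x y ▸ infDist_le_dist_of_mem hyS
    _ ≤ f x - f xb := by linarith

/-- Morse–Bott implies quadratic growth: if the solution set `S` is a C¹ submanifold near `xb`
(given by a local defining function `φ` with surjective differential, whose tangent space at `xb`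
is `T = ker Dφ(xb)`), the kernel of the Hessian equals `T`, and the Hessian is `μ`-positive
definite on the normal space `Tᗮ`, then for every `μ' < μ` quadratic growth holds near `xb`. -/
theorem mb_implies_qg {n d : ℕ}
    (f : EuclideanSpace ℝ (Fin n) → ℝ) (xb : EuclideanSpace ℝ (Fin n))
    (hf : ContDiff ℝ 2 f) (hmin : IsLocalMin f xb)
    (μ : ℝ) (hμ : 0 < μ)
    (S : Set (EuclideanSpace ℝ (Fin n)))
    (hS : S = {y | IsLocalMin f y ∧ f y = f xb})
    (U : Set (EuclideanSpace ℝ (Fin n))) (hUopen : IsOpen U) (hxU : xb ∈ U)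
    (φ : EuclideanSpace ℝ (Fin n) → EuclideanSpace ℝ (Fin d))
    (hφ : ContDiffOn ℝ 1 φ U)
    (hsurj : ∀ x ∈ U, Function.Surjective (fderiv ℝ φ x))
    (hdef : S ∩ U = {x ∈ U | φ x = 0})
    (T : Submodule ℝ (EuclideanSpace ℝ (Fin n)))
    (hT : T = LinearMap.ker (fderiv ℝ φ xb :
        EuclideanSpace ℝ (Fin n) →ₗ[ℝ] EuclideanSpace ℝ (Fin d)))
    (hker : LinearMap.ker (fderiv ℝ (gradient f) xb :
        EuclideanSpace ℝ (Fin n) →ₗ[ℝ] EuclideanSpace ℝ (Fin n)) = T)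
    (hpos : ∀ v ∈ Tᗮ, μ * ‖v‖ ^ 2 ≤ ⟪v, fderiv ℝ (gradient f) xb v⟫) :
    ∀ μ' < μ, ∀ᶠ x in 𝓝 xb, (μ' / 2) * (Metric.infDist x S) ^ 2 ≤ f x - f xb :=
  mb_implies_qg_general f xb hf hmin μ S hS U hUopen hxU φ hφ hsurj hdef T hT hpos
end

section
/- Let f : ℝⁿ → ℝ be C² with local minimum x̄, value f*, and solution set S. Suppose the error bound μ·dist(x,S) ≤ ‖∇f(x)‖ holds for all x in a neighborhood of x̄ with μ > 0. Then for every μ' < μ there is a neighborhood of x̄ on which the Polyak–Łojasiewicz inequality f(x) - f* ≤ (1/(2μ'))‖∇f(x)‖² holds. -/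
/-!
Near a point `p` of `S` we have `∇f(p) = 0` and `f(p) = f*`, so the trapezoid rule for the
`C²` function `f` on the segment `[p, x]` gives
`f(x) - f* ≤ ½ ‖∇f(x)‖ ‖x - p‖ + ε ‖x - p‖²`, with `ε` small once `x` and `p` are close to `x̄`
(strict differentiability of `∇f` at `x̄`). Choosing `p` with `‖x - p‖ ≤ κ · dist(x, S)`
for some `κ > 1` and bounding `dist(x, S) ≤ ‖∇f(x)‖ / μ` by the error bound turns this into
`f(x) - f* ≤ (κ / (2μ) + ε / μ²) ‖∇f(x)‖²`, and `κ`, `ε` can be chosen to make the constant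
`1 / (2μ')`.
-/

open Metric Filter Topology
open scoped NNReal

section

variable {E : Type*} [NormedAddCommGroup E] [NormedSpace ℝ E] {f : E → ℝ}
  {f' : E → E →L[ℝ] ℝ} {B : E →L[ℝ] E →L[ℝ] ℝ} {s : Set E} {c : ℝ≥0} {a p x : E}

open Set in
theorem ApproximatesLinearOn.abs_taylor_remainder_le (hf' : ApproximatesLinearOn f' B s c)
    (hs : Convex ℝ s) (hf : ∀ y ∈ s, HasFDerivAt f (f' y) y) (hp : p ∈ s) (hx : x ∈ s) :
    |f x - f p - f' p (x - p) - B (x - p) (x - p) / 2| ≤ c * ‖x - p‖ ^ 2 := by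
  set d := x - p
  let g : ℝ → ℝ := fun t ↦ f (p + t • d) - t * f' p d - t ^ 2 / 2 * B d d
  have hseg : ∀ t ∈ Icc (0 : ℝ) 1, p + t • d ∈ s := fun t ht ↦ hs.add_smul_sub_mem hp hx ht
  have hg : ∀ t ∈ Icc (0 : ℝ) 1,
      HasDerivAt g ((f' (p + t • d) - f' p - B (p + t • d - p)) d) t := by
    intro t ht
    have hline : HasDerivAt (fun t : ℝ ↦ p + t • d) d t :=
      ((hasDerivAt_id t).smul_const d).const_add p |>.congr_deriv (one_smul ℝ d)
    refine ((((hf _ (hseg t ht)).comp_hasDerivAt t hline).sub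
      ((hasDerivAt_id t).mul_const (f' p d))).sub
        (((hasDerivAt_pow 2 t).div_const 2).mul_const (B d d))).congr_deriv ?_
    simp only [add_sub_cancel_left, map_smul, sub_apply, smul_apply, smul_eq_mul]
    ring
  have hbound : ∀ t ∈ Ico (0 : ℝ) 1,
      ‖(f' (p + t • d) - f' p - B (p + t • d - p)) d‖ ≤ c * ‖d‖ ^ 2 := by
    intro t ht
    have hnear := hf' (p + t • d) (hseg t (Ico_subset_Icc_self ht)) p hp
    calc ‖(f' (p + t • d) - f' p - B (p + t • d - p)) d‖
        ≤ c * ‖p + t • d - p‖ * ‖d‖ := ((ContinuousLinearMap.le_opNorm _ _).trans (by gcongr))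
      _ ≤ c * ‖d‖ * ‖d‖ := by
        gcongr
        rw [add_sub_cancel_left, norm_smul, Real.norm_of_nonneg ht.1]
        exact mul_le_of_le_one_left (norm_nonneg d) ht.2.le
      _ = c * ‖d‖ ^ 2 := by ring
  have hmvt := norm_image_sub_le_of_norm_deriv_le_segment_01'
    (fun t ht ↦ (hg t ht).hasDerivWithinAt) hbound
  have hg01 : g 1 - g 0 = f x - f p - f' p d - B d d / 2 := by
    simp only [g, d, one_smul, zero_smul, add_sub_cancel, add_zero]
    ring
  simpa [hg01] using hmvt

theorem ApproximatesLinearOn.abs_trapezoid_error_le (hf' : ApproximatesLinearOn f' B s c)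
    (hs : Convex ℝ s) (hf : ∀ y ∈ s, HasFDerivAt f (f' y) y) (hp : p ∈ s) (hx : x ∈ s) :
    |f x - f p - (f' x + f' p) (x - p) / 2| ≤ 3 / 2 * c * ‖x - p‖ ^ 2 := by
  have htaylor := hf'.abs_taylor_remainder_le hs hf hp hx
  have hderiv : |(f' x - f' p - B (x - p)) (x - p)| ≤ c * ‖x - p‖ ^ 2 := by
    rw [← Real.norm_eq_abs, pow_two, ← mul_assoc]
    exact (ContinuousLinearMap.le_opNorm _ _).trans (by gcongr; exact hf' x hx p hp)
  have hsplit : f x - f p - (f' x + f' p) (x - p) / 2 =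
      (f x - f p - f' p (x - p) - B (x - p) (x - p) / 2) -
        (f' x - f' p - B (x - p)) (x - p) / 2 := by
    simp only [add_apply, sub_apply]
    ring
  rw [hsplit]
  calc _ ≤ |f x - f p - f' p (x - p) - B (x - p) (x - p) / 2| +
        |(f' x - f' p - B (x - p)) (x - p)| / 2 := by
        rw [← abs_two, ← abs_div, abs_two]; exact abs_sub _ _
    _ ≤ 3 / 2 * c * ‖x - p‖ ^ 2 := by linarith

theorem ContDiffAt.exists_ball_abs_trapezoid_error_le (hf : ContDiffAt ℝ 2 f a) {ε : ℝ}
    (hε : 0 < ε) :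
    ∃ δ > 0, ∀ p ∈ ball a δ, ∀ x ∈ ball a δ,
      |f x - f p - (fderiv ℝ f x + fderiv ℝ f p) (x - p) / 2| ≤ ε * ‖x - p‖ ^ 2 := by
  have hstrict : HasStrictFDerivAt (fderiv ℝ f) (fderiv ℝ (fderiv ℝ f) a) a :=
    (hf.fderiv_right (m := 1) le_rfl).hasStrictFDerivAt one_ne_zero
  obtain ⟨s, hs, happrox⟩ := hstrict.approximates_deriv_on_nhds
    (c := (2 / 3 * ε).toNNReal) (Or.inr (Real.toNNReal_pos.2 (by positivity)))
  obtain ⟨δ, hδ, hball⟩ := Metric.mem_nhds_iff.mp (inter_mem hs (hf.eventually (by simp)))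
  refine ⟨δ, hδ, fun p hp x hx ↦ ?_⟩
  have htrap := (happrox.mono_set fun y hy ↦ (hball hy).1).abs_trapezoid_error_le
    (convex_ball a δ) (fun y hy ↦ ((show ContDiffAt ℝ 2 f y from (hball hy).2).differentiableAt
      two_ne_zero).hasFDerivAt) hp hx
  rw [Real.coe_toNNReal _ (by positivity)] at htrap
  convert htrap using 2
  ring

theorem eventually_sub_le_mul_infDist_of_contDiffAt (hf : ContDiffAt ℝ 2 f a) {S : Set E}
    (ha : a ∈ S) (hS : ∀ p ∈ S, fderiv ℝ f p = 0 ∧ f p = f a) {κ ε : ℝ} (hκ : 1 < κ)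
    (hε : 0 < ε) :
    ∀ᶠ x in 𝓝 a, f x - f a ≤ κ / 2 * ‖fderiv ℝ f x‖ * infDist x S + ε * infDist x S ^ 2 := by
  obtain ⟨δ, hδ, htrap⟩ := hf.exists_ball_abs_trapezoid_error_le (ε := ε / κ ^ 2) (by positivity)
  filter_upwards [ball_mem_nhds a (show 0 < δ / (κ + 1) by positivity),
    hf.eventually (by simp)] with x hx hfx
  rcases (infDist_nonneg (x := x) (s := S)).eq_or_lt with hzero | hpos
  · have hxS : x ∈ closure S := (mem_closure_iff_infDist_zero ⟨a, ha⟩).2 hzero.symm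
    have hfx_eq : f x = f a := by
      simpa using hfx.continuousAt.continuousWithinAt.mem_closure (t := {f a}) hxS
        fun p hp ↦ (hS p hp).2
    simp [hfx_eq, ← hzero]
  obtain ⟨p, hpS, hxp⟩ := (infDist_lt_iff ⟨a, ha⟩).1 (lt_mul_of_one_lt_left hpos hκ)
  obtain ⟨hfp', hfp⟩ := hS p hpS
  have hxa : dist x a < δ / (κ + 1) := hx
  have hIa : infDist x S ≤ dist x a := infDist_le_dist_of_mem ha
  have hpa : p ∈ ball a δ := by
    rw [mem_ball]
    calc dist p a ≤ dist x p + dist x a := dist_triangle_left p a x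
      _ < (κ + 1) * dist x a := by nlinarith
      _ < δ := by rwa [lt_div_iff₀' (by positivity)] at hxa
  have hxa' : x ∈ ball a δ := by
    rw [mem_ball]
    exact hxa.trans_le (div_le_self hδ.le (by linarith))
  have hD : ‖x - p‖ ≤ κ * infDist x S := by rw [← dist_eq_norm]; exact hxp.le
  have hpx := htrap p hpa x hxa'
  rw [hfp', hfp, add_zero] at hpx
  calc f x - f a ≤ fderiv ℝ f x (x - p) / 2 + ε / κ ^ 2 * ‖x - p‖ ^ 2 := by
        linarith [le_abs_self (f x - f a - fderiv ℝ f x (x - p) / 2)]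
    _ ≤ ‖fderiv ℝ f x‖ * ‖x - p‖ / 2 + ε / κ ^ 2 * ‖x - p‖ ^ 2 := by
        gcongr; exact (le_abs_self _).trans ((fderiv ℝ f x).le_opNorm (x - p))
    _ ≤ ‖fderiv ℝ f x‖ * (κ * infDist x S) / 2 + ε / κ ^ 2 * (κ * infDist x S) ^ 2 := by
        gcongr
    _ = κ / 2 * ‖fderiv ℝ f x‖ * infDist x S + ε * infDist x S ^ 2 := by
        field_simp

end

/-- Error bound implies PL for C² functions, with arbitrarily small loss in the constant. -/
theorem eb_implies_pl {n : ℕ}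
    (f : EuclideanSpace ℝ (Fin n) → ℝ) (xb : EuclideanSpace ℝ (Fin n))
    (hf : ContDiff ℝ 2 f) (hmin : IsLocalMin f xb)
    (μ : ℝ) (hμ : 0 < μ)
    (S : Set (EuclideanSpace ℝ (Fin n)))
    (hS : S = {y | IsLocalMin f y ∧ f y = f xb})
    (hEB : ∀ᶠ x in 𝓝 xb, μ * Metric.infDist x S ≤ ‖gradient f x‖) :
    ∀ μ', 0 < μ' → μ' < μ →
      ∀ᶠ x in 𝓝 xb, f x - f xb ≤ (1 / (2 * μ')) * ‖gradient f x‖ ^ 2 := by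
  intro μ' hμ' hμ'μ
  have hcrit : ∀ p ∈ S, fderiv ℝ f p = 0 ∧ f p = f xb := by
    rw [hS]; exact fun p hp ↦ ⟨hp.1.fderiv_eq_zero, hp.2⟩
  have hq : 1 < μ / μ' := (one_lt_div hμ').2 hμ'μ
  -- `κ` and `ε` are chosen so that `κ / (2μ) + ε / μ² = 1 / (2μ')`
  filter_upwards [eventually_sub_le_mul_infDist_of_contDiffAt hf.contDiffAt
    (hS ▸ ⟨hmin, rfl⟩) hcrit (κ := (1 + μ / μ') / 2) (ε := (μ / μ' - 1) * μ / 4)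
    (by linarith) (by nlinarith), hEB]
    with x hx hEBx
  have hG : ‖gradient f x‖ = ‖fderiv ℝ f x‖ := by simp [gradient]
  have hI : infDist x S ≤ ‖gradient f x‖ / μ := by rwa [le_div_iff₀' hμ]
  calc f x - f xb
      ≤ (1 + μ / μ') / 2 / 2 * ‖gradient f x‖ * infDist x S
        + (μ / μ' - 1) * μ / 4 * infDist x S ^ 2 := by rwa [hG]
    _ ≤ (1 + μ / μ') / 2 / 2 * ‖gradient f x‖ * (‖gradient f x‖ / μ)
        + (μ / μ' - 1) * μ / 4 * (‖gradient f x‖ / μ) ^ 2 := by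
        gcongr
        exact infDist_nonneg
    _ = 1 / (2 * μ') * ‖gradient f x‖ ^ 2 := by
        field_simp
        ring
end

section
/- Let f : ℝⁿ → ℝ be C¹ with L-Lipschitz gradient in a neighborhood of a local minimum x̄ with value f* and solution set S. If the error bound μ·dist(x,S) ≤ ‖∇f(x)‖ holds near x̄, then the PL inequality f(x) - f* ≤ (L/(2μ²))‖∇f(x)‖² holds for all x sufficiently close to x̄. -/
/-! Points of `S` are critical, so the descent lemma at `y ∈ S` gives
`f x - f* ≤ (L/2) ‖x - y‖²` for `y` near `x`; taking the infimum over `y` yields the quadratic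
growth bound `f x - f* ≤ (L/2) dist(x, S)²`, and the error bound `dist(x, S) ≤ ‖∇f x‖ / μ`
turns it into the PL inequality. -/

open Metric Filter Topology

theorem le_mul_infDist_sq {α : Type*} [PseudoMetricSpace α] {S : Set α} {x : α} {a c R : ℝ}
    (hc : 0 ≤ c) (hS : S.Nonempty) (hR : infDist x S < R)
    (h : ∀ y ∈ S, dist x y < R → a ≤ c * dist x y ^ 2) :
    a ≤ c * infDist x S ^ 2 := by
  by_contra! hlt
  have hnear : ∀ᶠ t in 𝓝[>] infDist x S, c * t ^ 2 < a ∧ t < R :=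
    nhdsWithin_le_nhds <| ((continuous_const.mul (continuous_pow 2)).tendsto _ |>.eventually
      (gt_mem_nhds hlt)).and (gt_mem_nhds hR)
  obtain ⟨t, ⟨hta, htR⟩, hdt⟩ := (hnear.and self_mem_nhdsWithin).exists
  obtain ⟨y, hyS, hyt⟩ := (infDist_lt_iff hS).1 hdt
  have hay := h y hyS (hyt.trans htR)
  have : c * dist x y ^ 2 ≤ c * t ^ 2 := by gcongr
  linarith

section Descent

variable {E : Type*} [NormedAddCommGroup E] [InnerProductSpace ℝ E] [CompleteSpace E]

theorem sub_sub_inner_gradient_le {f : E → ℝ} {x y : E} {L : ℝ}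
    (hf : ∀ z ∈ segment ℝ y x, DifferentiableAt ℝ f z)
    (hLip : ∀ z ∈ segment ℝ y x, ‖gradient f z - gradient f y‖ ≤ L * ‖z - y‖) :
    f x - f y - inner ℝ (gradient f y) (x - y) ≤ L / 2 * ‖x - y‖ ^ 2 := by
  set v := x - y
  set c : ℝ → E := fun t => y + t • v
  have hc : ∀ t ∈ Set.Icc (0 : ℝ) 1, c t ∈ segment ℝ y x := fun t ht => by
    rw [segment_eq_image']; exact ⟨t, ht, rfl⟩
  have hderiv : ∀ t ∈ Set.Icc (0 : ℝ) 1,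
      HasDerivAt (fun t => f (c t) - t * inner ℝ (gradient f y) v)
      (inner ℝ (gradient f (c t) - gradient f y) v) t := by
    intro t ht
    have hcurve : HasDerivAt c v t := by
      have := ((hasDerivAt_id t).smul_const v).const_add y
      simpa only [id, one_smul] using this
    refine (((hf _ (hc t ht)).hasGradientAt.hasFDerivAt.comp_hasDerivAt t hcurve).sub
      ((hasDerivAt_id t).mul_const (inner ℝ (gradient f y) v))).congr_deriv ?_
    simp [inner_sub_left]
  have hB : ∀ t : ℝ, HasDerivAt (fun t => f y + L / 2 * ‖v‖ ^ 2 * t ^ 2) (L * ‖v‖ ^ 2 * t) t :=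
    fun t => (((hasDerivAt_pow 2 t).const_mul (L / 2 * ‖v‖ ^ 2)).const_add (f y)).congr_deriv
      (by ring)
  have key := image_le_of_deriv_right_le_deriv_boundary
    (fun t ht => (hderiv t ht).continuousAt.continuousWithinAt)
    (fun t ht => (hderiv t (Set.Ico_subset_Icc_self ht)).hasDerivWithinAt)
    (by simp [c]) (by fun_prop) (fun t _ => (hB t).hasDerivWithinAt)
    (fun t ht => calc
      inner ℝ (gradient f (c t) - gradient f y) v ≤ ‖gradient f (c t) - gradient f y‖ * ‖v‖ :=
        real_inner_le_norm _ _
      _ ≤ L * ‖c t - y‖ * ‖v‖ := by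
        gcongr; exact hLip _ (hc t (Set.Ico_subset_Icc_self ht))
      _ = L * ‖v‖ ^ 2 * t := by
        simp only [c, add_sub_cancel_left, norm_smul, Real.norm_of_nonneg ht.1]; ring)
    (Set.right_mem_Icc.2 zero_le_one)
  simp only [c, v, one_smul, add_sub_cancel, one_mul, one_pow, mul_one] at key
  linarith

theorem eventually_sub_le_half_mul_infDist_sq {f : E → ℝ} {x₀ : E} {S U : Set E} {L : ℝ}
    (hL : 0 ≤ L) (hx₀ : x₀ ∈ S) (hS : ∀ y ∈ S, gradient f y = 0 ∧ f y = f x₀) (hU : U ∈ 𝓝 x₀)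
    (hf : ∀ x ∈ U, DifferentiableAt ℝ f x)
    (hLip : ∀ x ∈ U, ∀ y ∈ U, ‖gradient f x - gradient f y‖ ≤ L * ‖x - y‖) :
    ∀ᶠ x in 𝓝 x₀, f x - f x₀ ≤ L / 2 * infDist x S ^ 2 := by
  obtain ⟨r, hr, hrU⟩ := Metric.mem_nhds_iff.1 hU
  filter_upwards [ball_mem_nhds x₀ (half_pos hr)] with x hx
  refine le_mul_infDist_sq (by positivity) ⟨x₀, hx₀⟩
    ((infDist_le_dist_of_mem hx₀).trans_lt hx) fun y hyS hxy => ?_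
  have hy : y ∈ ball x₀ r := by
    rw [mem_ball] at hx ⊢; linarith [dist_triangle_left y x₀ x]
  have hseg : segment ℝ y x ⊆ U :=
    ((convex_ball x₀ r).segment_subset hy (ball_subset_ball (half_le_self hr.le) hx)).trans hrU
  have := sub_sub_inner_gradient_le (fun z hz => hf z (hseg hz))
    (fun z hz => hLip z (hseg hz) y (hseg (left_mem_segment ℝ y x)))
  rwa [(hS y hyS).1, (hS y hyS).2, inner_zero_left, sub_zero, ← dist_eq_norm] at this

end Descent

/-- Error bound implies PL with constant `μ²/L` for C¹ functions with `L`-Lipschitz gradient. -/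
theorem eb_implies_pl_c1 {n : ℕ}
    (f : EuclideanSpace ℝ (Fin n) → ℝ) (xb : EuclideanSpace ℝ (Fin n))
    (hf : ContDiff ℝ 1 f) (hmin : IsLocalMin f xb)
    (μ L : ℝ) (hμ : 0 < μ) (hL : 0 ≤ L)
    (S : Set (EuclideanSpace ℝ (Fin n)))
    (hS : S = {y | IsLocalMin f y ∧ f y = f xb})
    (U : Set (EuclideanSpace ℝ (Fin n))) (hU : U ∈ 𝓝 xb)
    (hLip : ∀ x ∈ U, ∀ y ∈ U, ‖gradient f x - gradient f y‖ ≤ L * ‖x - y‖)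
    (hEB : ∀ x ∈ U, μ * Metric.infDist x S ≤ ‖gradient f x‖) :
    ∀ᶠ x in 𝓝 xb, f x - f xb ≤ (L / (2 * μ ^ 2)) * ‖gradient f x‖ ^ 2 := by
  have hcrit : ∀ y ∈ S, gradient f y = 0 ∧ f y = f xb := by
    rw [hS]
    rintro y ⟨hy, hfy⟩
    exact ⟨by rw [gradient, hy.fderiv_eq_zero, map_zero], hfy⟩
  have hgrowth := eventually_sub_le_half_mul_infDist_sq hL (hS ▸ ⟨hmin, rfl⟩) hcrit hU
    (fun x _ => (hf.differentiable one_ne_zero).differentiableAt) hLip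
  filter_upwards [hgrowth, hU] with x hgrowth_x hxU
  have hdist : infDist x S ≤ ‖gradient f x‖ / μ := by
    rw [le_div_iff₀ hμ]; linarith [hEB x hxU]
  calc f x - f xb ≤ L / 2 * infDist x S ^ 2 := hgrowth_x
    _ ≤ L / 2 * (‖gradient f x‖ / μ) ^ 2 := by gcongr; exact infDist_nonneg
    _ = L / (2 * μ ^ 2) * ‖gradient f x‖ ^ 2 := by field_simp
end

section
/- Let S ⊆ ℝⁿ be the set of local minimizers of f with common value f* where f is continuous. For every x̄ ∈ S there exists a neighborhood U of x̄ such that for every x ∈ U, the metric projection of x onto S is non-empty, i.e., there exists y ∈ S with ‖x - y‖ = dist(x, S). -/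
open Metric Filter Topology

/-- Around each point of the set `S` of local minima with a common value, there is a
neighborhood on which the metric projection onto `S` is non-empty. -/
theorem proj_nonempty_near {n : ℕ}
    (f : EuclideanSpace ℝ (Fin n) → ℝ) (hf : Continuous f)
    (xb : EuclideanSpace ℝ (Fin n)) (hmin : IsLocalMin f xb)
    (S : Set (EuclideanSpace ℝ (Fin n)))
    (hS : S = {y | IsLocalMin f y ∧ f y = f xb}) :
    ∃ U ∈ 𝓝 xb, ∀ x ∈ U, ∃ y ∈ S, dist x y = Metric.infDist x S := by
  -- get ε with f ≥ f xb on ball xb ε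
  obtain ⟨ε, hε, hball⟩ := Metric.mem_nhds_iff.1 hmin
  set r := ε / 2 with hr
  have hr0 : 0 < r := by positivity
  have hrε : r < ε := by linarith
  set K : Set (EuclideanSpace ℝ (Fin n)) := S ∩ closedBall xb r with hK
  have hxbS : xb ∈ S := by rw [hS]; exact ⟨hmin, rfl⟩
  have hxbK : xb ∈ K := ⟨hxbS, mem_closedBall_self hr0.le⟩
  -- K is closed
  have hKclosed : IsClosed K := by
    rw [← closure_eq_iff_isClosed]
    apply Set.Subset.antisymm _ subset_closure
    intro y hy
    have hyb : y ∈ closedBall xb r :=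
      Metric.isClosed_closedBall.closure_subset
        (closure_mono (Set.inter_subset_right) hy)
    have hyball : y ∈ ball xb ε := lt_of_le_of_lt (mem_closedBall.1 hyb) hrε
    -- f y = f xb
    have hfy : f y = f xb := by
      have h1 : f xb ≤ f y := hball hyball
      have h2 : f y ≤ f xb := by
        have : y ∈ closure {z | f z ≤ f xb} := by
          refine closure_mono ?_ hy
          rintro z ⟨hzS, _⟩
          rw [hS] at hzS
          exact le_of_eq hzS.2
        have hcl : IsClosed {z | f z ≤ f xb} := isClosed_le hf continuous_const
        exact hcl.closure_subset this
      linarith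
    refine ⟨?_, hyb⟩
    rw [hS]
    refine ⟨?_, hfy⟩
    have : ball xb ε ∈ 𝓝 y := isOpen_ball.mem_nhds hyball
    refine Filter.eventually_of_mem this ?_
    intro z hz
    rw [hfy]
    exact hball hz
  have hKcompact : IsCompact K :=
    (isCompact_closedBall xb r).of_isClosed_subset hKclosed Set.inter_subset_right
  refine ⟨ball xb (r / 3), isOpen_ball.mem_nhds (mem_ball_self (by positivity)), ?_⟩
  intro x hx
  have hxb : dist x xb < r / 3 := mem_ball.1 hx
  obtain ⟨y, hyK, hyd⟩ := hKcompact.exists_infDist_eq_dist ⟨xb, hxbK⟩ x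
  refine ⟨y, hyK.1, ?_⟩
  have h1 : infDist x S ≤ infDist x K :=
    infDist_le_infDist_of_subset Set.inter_subset_left ⟨xb, hxbK⟩
  have h2 : infDist x K ≤ infDist x S := by
    by_contra h
    push_neg at h
    obtain ⟨z, hz, hzd⟩ := (infDist_lt_iff ⟨xb, hxbS⟩).1 h
    have hxK : infDist x K ≤ dist x xb := infDist_le_dist_of_mem hxbK
    have hzb : z ∈ closedBall xb r := by
      rw [mem_closedBall]
      have htri : dist z xb ≤ dist x z + dist x xb := by
        have := dist_triangle z x xb
        simpa [dist_comm] using this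
      linarith
    have : infDist x K ≤ dist x z := infDist_le_dist_of_mem ⟨hz, hzb⟩
    linarith
  rw [← hyd]
  linarith
end

section
/- Let f : ℝⁿ → ℝ be C² and let S be the set of local minima of f with value f* containing x̄. If f satisfies quadratic growth f(x) - f* ≥ (μ/2)dist(x,S)² in a neighborhood of x̄, then for every y ∈ S sufficiently close to x̄ and every v in the normal cone N_yS one has ⟨v, ∇²f(y)v⟩ ≥ μ‖v‖² and ‖∇²f(y)v‖ ≥ μ‖v‖. -/
/-!
Let `y ∈ S` and `v ∈ N_yS`. By compactness of balls, a sequence `tₖ ↓ 0` along which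
`dist(y + tₖv, S) < b tₖ` yields a tangent vector `u` with `‖u - v‖ ≤ b`; since `⟪v, u⟫ ≤ 0` forces
`‖v - u‖ ≥ ‖v‖`, this gives `dist(y + tv, S) / t → ‖v‖`. As `∇f(y) = 0`, l'Hôpital's rule gives
`(f(y + tv) - f(y)) / t² → ⟪v, ∇²f(y)v⟫ / 2`. Dividing the quadratic growth inequality at `y + tv`
by `t²` and letting `t → 0⁺` yields `μ‖v‖² ≤ ⟪v, ∇²f(y)v⟫`; Cauchy–Schwarz gives the second bound.
-/

open Metric Filter Topology
open scoped RealInnerProductSpace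

/-- The normal cone to a set `S` at `y`: the polar of the (positive) tangent cone. -/
def normalCone {n : ℕ} (S : Set (EuclideanSpace ℝ (Fin n))) (y : EuclideanSpace ℝ (Fin n)) :
    Set (EuclideanSpace ℝ (Fin n)) :=
  {w | ∀ u ∈ posTangentConeAt S y, ⟪w, u⟫ ≤ 0}

theorem tendsto_sub_div_sq_nhdsGT_of_hasDerivAt {g g' : ℝ → ℝ} {D : ℝ}
    (hg : ∀ᶠ t in 𝓝 0, HasDerivAt g (g' t) t) (hg'0 : g' 0 = 0) (hg' : HasDerivAt g' D 0) :
    Tendsto (fun t => (g t - g 0) / t ^ 2) (𝓝[>] 0) (𝓝 (D / 2)) := by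
  have hslope : Tendsto (fun t => g' t / (2 * t)) (𝓝[>] 0) (𝓝 (D / 2)) := by
    refine (hg'.tendsto_slope_zero_right.div_const 2).congr fun t => ?_
    simp only [zero_add, hg'0, sub_zero, smul_eq_mul]
    ring
  have hcont : Tendsto (fun t => g t - g 0) (𝓝 0) (𝓝 0) := by
    simpa using hg.self_of_nhds.continuousAt.sub_const (g 0)
  refine HasDerivAt.lhopital_zero_nhdsGT (f' := g') (g' := fun t => 2 * t)
    ((hg.filter_mono nhdsWithin_le_nhds).mono fun t ht => ht.sub_const (g 0))
    (.of_forall fun t => by simpa using hasDerivAt_pow 2 t)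
    (eventually_mem_nhdsWithin.mono fun t (ht : 0 < t) => by positivity)
    (hcont.mono_left nhdsWithin_le_nhds) ?_ hslope
  simpa using ((continuous_pow 2).tendsto (0 : ℝ)).mono_left nhdsWithin_le_nhds

section TangentCone

variable {E : Type*} [NormedAddCommGroup E]

theorem IsCompact.exists_mem_tangentConeAt {R : Type*} [SMul R E] {s K : Set E} {x : E}
    (hK : IsCompact K) {α : Type*} {l : Filter α} [l.NeBot] {c : α → R} {d : α → E}
    (hd₀ : Tendsto d l (𝓝 0)) (hds : ∀ᶠ n in l, x + d n ∈ s)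
    (hcd : ∀ᶠ n in l, c n • d n ∈ K) : ∃ u ∈ K, u ∈ tangentConeAt R s x := by
  obtain ⟨u, huK, hu⟩ := hK.exists_mapClusterPt (le_principal_iff.2 hcd)
  obtain ⟨U, hUl, hUu⟩ := mapClusterPt_iff_ultrafilter.1 hu
  exact ⟨u, huK, mem_tangentConeAt_of_seq U c d (hd₀.mono_left hUl) (hds.filter_mono hUl) hUu⟩

variable [NormedSpace ℝ E] [ProperSpace E]

theorem exists_mem_posTangentConeAt_dist_le {s : Set E} {y v : E} {b : ℝ} (hy : y ∈ s)
    (h : ∃ᶠ t in 𝓝[>] 0, infDist (y + t • v) s < b * t) :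
    ∃ u ∈ posTangentConeAt s y, dist u v ≤ b := by
  obtain ⟨t, ht₀, ht⟩ := exists_seq_forall_of_frequently (h.and_eventually self_mem_nhdsWithin)
  have hx : ∀ k, ∃ x ∈ s, dist (y + t k • v) x < b * t k := fun k =>
    (infDist_lt_iff ⟨y, hy⟩).1 (ht k).1
  choose x hxs hxd using hx
  have htpos (k : ℕ) : 0 < t k := (ht k).2
  have hscaled (k : ℕ) : dist ((t k)⁻¹ • (x k - y)) v < b := by
    have hsub : (t k)⁻¹ • (x k - y) - v = (t k)⁻¹ • (x k - (y + t k • v)) := by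
      simp only [smul_sub, smul_add, smul_smul, inv_mul_cancel₀ (htpos k).ne', one_smul]
      abel
    rw [dist_eq_norm, hsub, norm_smul, Real.norm_of_nonneg (inv_nonneg.2 (htpos k).le),
      ← dist_eq_norm, dist_comm, inv_mul_lt_iff₀ (htpos k), mul_comm]
    exact hxd k
  have hd₀ : Tendsto (fun k => x k - y) atTop (𝓝 0) := by
    refine squeeze_zero_norm (fun k => ?_) <| by
      simpa using (tendsto_nhds_of_tendsto_nhdsWithin ht₀).const_mul (b + ‖v‖)
    calc ‖x k - y‖ = ‖(x k - (y + t k • v)) + t k • v‖ := by abel_nf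
      _ ≤ dist (y + t k • v) (x k) + t k * ‖v‖ := by
        rw [dist_comm, dist_eq_norm]
        simpa [norm_smul, abs_of_pos (htpos k)] using norm_add_le (x k - (y + t k • v)) (t k • v)
      _ ≤ (b + ‖v‖) * t k := by nlinarith [hxd k]
  obtain ⟨u, hu, hT⟩ := (isCompact_closedBall v b).exists_mem_tangentConeAt (s := s) (x := y)
    (c := fun k => (⟨(t k)⁻¹, (inv_pos.2 (htpos k)).le⟩ : NNReal)) hd₀
    (.of_forall fun k => by simpa using hxs k) (.of_forall fun k => (hscaled k).le)
  exact ⟨u, hT, hu⟩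

end TangentCone

section InnerProductSpace

variable {E : Type*} [NormedAddCommGroup E] [InnerProductSpace ℝ E]

theorem norm_le_norm_sub_of_inner_nonpos {u v : E} (h : ⟪v, u⟫ ≤ 0) : ‖v‖ ≤ ‖v - u‖ :=
  le_of_pow_le_pow_left₀ two_ne_zero (norm_nonneg _) <| by
    rw [norm_sub_sq_real]; nlinarith [sq_nonneg ‖u‖]

theorem norm_le_norm_of_mul_sq_le_inner {μ : ℝ} {v w : E} (h : μ * ‖v‖ ^ 2 ≤ ⟪v, w⟫) :
    μ * ‖v‖ ≤ ‖w‖ := by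
  rcases (norm_nonneg v).eq_or_lt with hv | hv
  · simp [← hv]
  · refine le_of_mul_le_mul_left ?_ hv
    calc ‖v‖ * (μ * ‖v‖) = μ * ‖v‖ ^ 2 := by ring
      _ ≤ ⟪v, w⟫ := h
      _ ≤ ‖v‖ * ‖w‖ := real_inner_le_norm v w

theorem tendsto_infDist_add_smul_div_self [ProperSpace E] {s : Set E} {y v : E} (hy : y ∈ s)
    (hv : ∀ u ∈ posTangentConeAt s y, ⟪v, u⟫ ≤ 0) :
    Tendsto (fun t => infDist (y + t • v) s / t) (𝓝[>] 0) (𝓝 ‖v‖) := by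
  refine tendsto_order.2 ⟨fun a ha => ?_, fun b hb => ?_⟩
  · by_contra h
    obtain ⟨u, hu, huv⟩ :=
        exists_mem_posTangentConeAt_dist_le (v := v) (b := (a + ‖v‖) / 2) hy <| by
      refine ((not_eventually.1 h).and_eventually self_mem_nhdsWithin).mono fun t ⟨hle, ht⟩ => ?_
      rw [not_lt, div_le_iff₀ ht] at hle
      nlinarith
    have := norm_le_norm_sub_of_inner_nonpos (hv u hu)
    rw [← dist_eq_norm, dist_comm] at this
    linarith
  · filter_upwards [self_mem_nhdsWithin] with t (ht : 0 < t)
    rw [div_lt_iff₀ ht]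
    calc infDist (y + t • v) s ≤ dist (y + t • v) y := infDist_le_dist_of_mem hy
      _ = ‖v‖ * t := by simp [norm_smul, abs_of_pos ht, mul_comm]
      _ < b * t := by gcongr

theorem tendsto_add_smul_sub_div_sq_of_gradient_eq_zero [CompleteSpace E] {f : E → ℝ}
    {H : E →L[ℝ] E} {y : E} (v : E) (hf : ∀ᶠ x in 𝓝 y, DifferentiableAt ℝ f x)
    (hH : HasFDerivAt (gradient f) H y) (hy : gradient f y = 0) :
    Tendsto (fun t => (f (y + t • v) - f y) / t ^ 2) (𝓝[>] 0) (𝓝 (⟪v, H v⟫ / 2)) := by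
  have hline (t : ℝ) : HasDerivAt (fun s : ℝ => y + s • v) v t := by
    simpa using ((hasDerivAt_id t).smul_const v).const_add y
  have hline_tendsto : Tendsto (fun s : ℝ => y + s • v) (𝓝 0) (𝓝 y) := by
    simpa using (hline 0).continuousAt.tendsto
  have hderiv : ∀ᶠ t in 𝓝 0, HasDerivAt (fun s : ℝ => f (y + s • v))
      ⟪gradient f (y + t • v), v⟫ t := by
    filter_upwards [hline_tendsto.eventually hf] with t ht
    rw [inner_gradient_left]
    exact ht.hasFDerivAt.comp_hasDerivAt t (hline t)
  have hderiv₂ : HasDerivAt (fun t : ℝ => ⟪gradient f (y + t • v), v⟫) ⟪v, H v⟫ 0 := by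
    have hH' : HasFDerivAt (gradient f) H (y + (0 : ℝ) • v) := by simpa using hH
    rw [real_inner_comm]
    simpa using (hH'.comp_hasDerivAt 0 (hline 0)).inner ℝ (hasDerivAt_const (0 : ℝ) v)
  simpa using tendsto_sub_div_sq_nhdsGT_of_hasDerivAt hderiv (by simp [hy]) hderiv₂

end InnerProductSpace

theorem qg_hessian_normal_bounds_general {n : ℕ}
    (f : EuclideanSpace ℝ (Fin n) → ℝ) (xb : EuclideanSpace ℝ (Fin n))
    (hf : ContDiff ℝ 2 f)
    (μ : ℝ)
    (S : Set (EuclideanSpace ℝ (Fin n)))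
    (hS : S = {y | IsLocalMin f y ∧ f y = f xb})
    (hQG : ∀ᶠ x in 𝓝 xb, (μ / 2) * (Metric.infDist x S) ^ 2 ≤ f x - f xb) :
    ∀ᶠ y in 𝓝 xb, y ∈ S → ∀ v ∈ normalCone S y,
      μ * ‖v‖ ^ 2 ≤ ⟪v, fderiv ℝ (gradient f) y v⟫ ∧
      μ * ‖v‖ ≤ ‖fderiv ℝ (gradient f) y v‖ := by
  have hgrad : Differentiable ℝ (gradient f) :=
    ((InnerProductSpace.toDual ℝ _).symm.contDiff.comp
      (hf.fderiv_right (m := 1) le_rfl)).differentiable one_ne_zero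
  filter_upwards [hQG.eventually_nhds] with y hQGy hyS v hv
  obtain ⟨hymin, hyval⟩ : IsLocalMin f y ∧ f y = f xb := by rwa [hS] at hyS
  have hdist := tendsto_infDist_add_smul_div_self hyS hv
  have htaylor := tendsto_add_smul_sub_div_sq_of_gradient_eq_zero v
    (.of_forall (hf.differentiable two_ne_zero)) (hgrad y).hasFDerivAt
    (by simp [gradient, hymin.fderiv_eq_zero])
  have hgrowth : ∀ᶠ t in 𝓝[>] 0,
      μ / 2 * (infDist (y + t • v) S / t) ^ 2 ≤ (f (y + t • v) - f y) / t ^ 2 := by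
    have hline : Tendsto (fun t : ℝ => y + t • v) (𝓝[>] 0) (𝓝 y) :=
      ((continuous_const.add (continuous_id.smul continuous_const)).tendsto' 0 y
        (by simp)).mono_left nhdsWithin_le_nhds
    filter_upwards [hline.eventually hQGy] with t ht
    rw [div_pow, ← mul_div_assoc, hyval]
    exact div_le_div_of_nonneg_right ht (sq_nonneg t)
  have hquad : μ / 2 * ‖v‖ ^ 2 ≤ ⟪v, fderiv ℝ (gradient f) y v⟫ / 2 :=
    le_of_tendsto_of_tendsto ((hdist.pow 2).const_mul _) htaylor hgrowth
  have hμ : μ * ‖v‖ ^ 2 ≤ ⟪v, fderiv ℝ (gradient f) y v⟫ := by linarith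
  exact ⟨hμ, norm_le_norm_of_mul_sq_le_inner hμ⟩

/-- Quadratic growth implies Hessian lower bounds along normal directions, for C² functions. -/
theorem qg_hessian_normal_bounds {n : ℕ}
    (f : EuclideanSpace ℝ (Fin n) → ℝ) (xb : EuclideanSpace ℝ (Fin n))
    (hf : ContDiff ℝ 2 f) (hmin : IsLocalMin f xb)
    (μ : ℝ) (hμ : 0 < μ)
    (S : Set (EuclideanSpace ℝ (Fin n)))
    (hS : S = {y | IsLocalMin f y ∧ f y = f xb})
    (hQG : ∀ᶠ x in 𝓝 xb, (μ / 2) * (Metric.infDist x S) ^ 2 ≤ f x - f xb) :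
    ∀ᶠ y in 𝓝 xb, y ∈ S → ∀ v ∈ normalCone S y,
      μ * ‖v‖ ^ 2 ≤ ⟪v, fderiv ℝ (gradient f) y v⟫ ∧
      μ * ‖v‖ ≤ ‖fderiv ℝ (gradient f) y v‖ :=
  qg_hessian_normal_bounds_general f xb hf μ S hS hQG
end

section
/- Let S ⊆ ℝⁿ contain x̄ and let v ∈ N_{x̄}S be a unit vector in the normal cone of S at x̄. Then dist(x̄ + tv, S) = t + o(t) as t → 0⁺. -/
/-!
If `v` is normal to `S` at `x`, then `⟪v, y - x⟫ ≤ ε ‖y - x‖` for all `y ∈ S` close enough to `x`: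
otherwise the normalized directions of the offending points would cluster (by compactness of the
unit sphere) at a tangent direction `w` with `⟪v, w⟫ ≥ ε > 0`. For such nearby `y`, pairing
`x + t • v - y` with the unit vector `v` gives `‖x + t • v - y‖ ≥ t - ε ‖y - x‖ ≥ (1 - 2ε) t`,
while far-away points are at distance at least `t`; and `x ∈ S` gives the upper bound `t`.
-/

open Metric Filter Topology Asymptotics
open scoped RealInnerProductSpace

section InnerProductSpace

variable {E : Type*} [NormedAddCommGroup E] [InnerProductSpace ℝ E]

theorem eventually_inner_sub_le_of_forall_posTangentConeAt [ProperSpace E] {S : Set E} {x v : E}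
    (hv : ∀ u ∈ posTangentConeAt S x, ⟪v, u⟫ ≤ 0) {ε : ℝ} (hε : 0 < ε) :
    ∀ᶠ y in 𝓝[S] x, ⟪v, y - x⟫ ≤ ε * ‖y - x‖ := by
  by_contra hbad
  set l := 𝓝[S] x ⊓ 𝓟 {y | ε * ‖y - x‖ < ⟪v, y - x⟫}
  have : l.NeBot :=
    frequently_iff_neBot.1 <| by simpa only [not_le] using not_eventually.1 hbad
  set g : E → E := fun y ↦ ‖y - x‖⁻¹ • (y - x)
  have hg : ∀ᶠ y in l, ε < ⟪v, g y⟫ ∧ g y ∈ sphere 0 1 := by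
    filter_upwards [mem_inf_of_right (mem_principal_self _)] with y (hy : ε * ‖y - x‖ < _)
    have hyx : 0 < ‖y - x‖ := norm_pos_iff.2 fun h ↦ by simp [h] at hy
    refine ⟨?_, by simp [g, norm_smul, hyx.ne']⟩
    rw [real_inner_smul_right, lt_inv_mul_iff₀ hyx, mul_comm]
    exact hy
  obtain ⟨w, -, hw⟩ :=
    isCompact_sphere (0 : E) 1 (f := map g l) (tendsto_principal.2 (hg.mono fun _ ↦ And.right))
  set l' := comap g (𝓝 w) ⊓ l
  have : l'.NeBot := by rw [← map_neBot_iff g, Filter.push_pull']; exact hw.neBot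
  have hgw : Tendsto g l' (𝓝 w) := tendsto_comap.mono_left inf_le_left
  have hl'S : l' ≤ 𝓝[S] x := inf_le_right.trans inf_le_left
  have hw_tan : w ∈ posTangentConeAt S x := by
    refine mem_tangentConeAt_of_seq l' (fun y ↦ ‖y - x‖₊⁻¹) (fun y ↦ y - x) ?_ ?_ ?_
    · exact tendsto_sub_nhds_zero_iff.2 (tendsto_id'.2 (hl'S.trans nhdsWithin_le_nhds))
    · exact (eventually_mem_nhdsWithin.filter_mono hl'S).mono fun y hy ↦ by rwa [add_sub_cancel]
    · simpa [NNReal.smul_def] using hgw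
  have : ε ≤ ⟪v, w⟫ := ge_of_tendsto (tendsto_const_nhds.inner hgw)
    ((hg.filter_mono inf_le_right).mono fun _ h ↦ h.1.le)
  linarith [hv w hw_tan]

theorem dist_add_smul_self {x v : E} (hv : ‖v‖ = 1) {t : ℝ} (ht : 0 ≤ t) :
    dist (x + t • v) x = t := by
  rw [dist_eq_norm, add_sub_cancel_left, norm_smul, hv, mul_one, Real.norm_of_nonneg ht]

theorem dist_le_dist_add_smul_add {x v y : E} (hv : ‖v‖ = 1) {t : ℝ} (ht : 0 ≤ t) :
    dist y x ≤ dist (x + t • v) y + t := by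
  simpa only [dist_comm y, dist_add_smul_self hv ht] using dist_triangle y (x + t • v) x

theorem sub_mul_le_dist_add_smul {x v y : E} (hv : ‖v‖ = 1) {ε t : ℝ} (hε : 0 ≤ ε) (ht : 0 ≤ t)
    (hy : ⟪v, y - x⟫ ≤ ε * ‖y - x‖) : (1 - 2 * ε) * t ≤ dist (x + t • v) y := by
  have hinner : t - ⟪v, y - x⟫ ≤ dist (x + t • v) y :=
    calc t - ⟪v, y - x⟫ = ⟪v, x + t • v - y⟫ := by
          simp only [inner_sub_right, inner_add_right, real_inner_smul_right,
            real_inner_self_eq_norm_sq, hv]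
          ring
      _ ≤ ‖v‖ * ‖x + t • v - y‖ := real_inner_le_norm _ _
      _ = dist (x + t • v) y := by rw [hv, one_mul, dist_eq_norm]
  have htriangle := dist_le_dist_add_smul_add (x := x) (y := y) hv ht
  rw [dist_eq_norm] at htriangle
  rcases le_total t (dist (x + t • v) y) with h | h
  · nlinarith
  · nlinarith [mul_le_mul_of_nonneg_left htriangle hε]

theorem sub_mul_le_infDist_add_smul {S : Set E} {x v : E} (hS : S.Nonempty) (hv : ‖v‖ = 1)
    {ε δ t : ℝ} (hε : 0 ≤ ε) (hδ : ∀ y ∈ S, dist y x < δ → ⟪v, y - x⟫ ≤ ε * ‖y - x‖)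
    (ht : 0 ≤ t) (htδ : 2 * t ≤ δ) : (1 - 2 * ε) * t ≤ infDist (x + t • v) S := by
  refine (le_infDist hS).2 fun y hy ↦ ?_
  by_cases hyx : dist y x < δ
  · exact sub_mul_le_dist_add_smul hv hε ht (hδ y hy hyx)
  · nlinarith [dist_le_dist_add_smul_add (x := x) (y := y) hv ht]

end InnerProductSpace

theorem dist_along_normal_general {n : ℕ}
    (S : Set (EuclideanSpace ℝ (Fin n))) (xb : EuclideanSpace ℝ (Fin n)) (hxb : xb ∈ S)
    (v : EuclideanSpace ℝ (Fin n)) (hv : ‖v‖ = 1) (hvN : v ∈ normalCone S xb) :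
    (fun t : ℝ => Metric.infDist (xb + t • v) S - t) =o[𝓝[>] (0 : ℝ)] fun t => t := by
  refine isLittleO_iff.2 fun c hc ↦ ?_
  obtain ⟨δ, hδ, hnear⟩ := Metric.eventually_nhds_iff.1 <| eventually_nhdsWithin_iff.1 <|
    eventually_inner_sub_le_of_forall_posTangentConeAt hvN (half_pos hc)
  filter_upwards [Ioo_mem_nhdsGT (half_pos hδ)] with t ⟨ht0, htδ⟩
  have hupper : infDist (xb + t • v) S ≤ t :=
    (infDist_le_dist_of_mem hxb).trans_eq (dist_add_smul_self hv ht0.le)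
  have hlower : (1 - 2 * (c / 2)) * t ≤ infDist (xb + t • v) S :=
    sub_mul_le_infDist_add_smul ⟨xb, hxb⟩ hv (half_pos hc).le (fun y hy hyx ↦ hnear hyx hy)
      ht0.le (by linarith)
  rw [Real.norm_of_nonneg ht0.le, Real.norm_eq_abs, abs_le]
  constructor <;> linarith

/-- Moving away from `S` along a unit normal direction, the distance to `S` grows at unit
first-order rate: `dist(xb + tv, S) = t + o(t)` as `t → 0⁺`. -/
theorem dist_along_normal {n : ℕ}
    (S : Set (EuclideanSpace ℝ (Fin n))) (xb : EuclideanSpace ℝ (Fin n)) (hxb : xb ∈ S)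
    (hproj : ∀ᶠ x in 𝓝 xb, ∃ y ∈ S, dist x y = Metric.infDist x S)
    (v : EuclideanSpace ℝ (Fin n)) (hv : ‖v‖ = 1) (hvN : v ∈ normalCone S xb) :
    (fun t : ℝ => Metric.infDist (xb + t • v) S - t) =o[𝓝[>] (0 : ℝ)] fun t => t :=
  dist_along_normal_general S xb hxb v hv hvN
end

section
/- The function f : ℝ → ℝ defined by f(x) = 2x² + x²·sin(1/√|x|) for x ≠ 0 and f(0) = 0 is C¹, satisfies quadratic growth around its global minimum x̄ = 0 (since f(x) ≥ x²), but has critical points with positive function value in every neighborhood of 0; in particular, f does not satisfy the PL inequality or the error bound around 0. -/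
/-!
Substituting `x = t⁻²` gives `f'(t⁻²) = 4/t² + (2/t²) sin t - cos t / (2t)`, whose last term
dominates for large `t`: `f'` is negative at `t = 2nπ` and positive at `t = (2n+1)π`, so by the
intermediate value theorem it vanishes somewhere in `[((2n+1)π)⁻², (2nπ)⁻²]`, where `f ≥ x² > 0`.
At such a point the PL inequality would give `0 < f x ≤ 0`, and the error bound would put `x` in
the closure of `S ⊆ f⁻¹{0}`.
-/

open Metric Filter Topology Real Set

section
variable {X : Type*}

def PolyakLojasiewicz (g g' : X → ℝ) (l : Filter X) : Prop :=
  ∃ C : ℝ, ∀ᶠ x in l, g x ≤ C * g' x ^ 2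

def ErrorBound [PseudoMetricSpace X] (S : Set X) (g' : X → ℝ) (l : Filter X) : Prop :=
  ∃ μ : ℝ, 0 < μ ∧ ∀ᶠ x in l, μ * infDist x S ≤ |g' x|

variable {g g' : X → ℝ} {l : Filter X}

theorem Filter.Frequently.not_polyakLojasiewicz (h : ∃ᶠ x in l, g' x = 0 ∧ 0 < g x) :
    ¬ PolyakLojasiewicz g g' l := by
  rintro ⟨C, hC⟩
  obtain ⟨x, ⟨hx', hx⟩, hxC⟩ := (h.and_eventually hC).exists
  rw [hx', sq, mul_zero, mul_zero] at hxC
  linarith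

theorem Filter.Frequently.not_errorBound [PseudoMetricSpace X] {S : Set X} (hS : S.Nonempty)
    (hg : Continuous g) (hSg : ∀ y ∈ S, g y = 0) (h : ∃ᶠ x in l, g' x = 0 ∧ 0 < g x) :
    ¬ ErrorBound S g' l := by
  rintro ⟨μ, hμ, hμS⟩
  obtain ⟨x, ⟨hx', hx⟩, hxμ⟩ := (h.and_eventually hμS).exists
  rw [hx', abs_zero] at hxμ
  have hdist : infDist x S = 0 :=
    le_antisymm (nonpos_of_mul_nonpos_right hxμ hμ) infDist_nonneg
  have hclosure : closure S ⊆ g ⁻¹' {0} :=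
    closure_minimal hSg (isClosed_singleton.preimage hg)
  exact hx.ne' (hclosure ((mem_closure_iff_infDist_zero hS).2 hdist))

end

noncomputable def oscQuad (x : ℝ) : ℝ := 2 * x ^ 2 + x ^ 2 * sin (1 / √|x|)

noncomputable def oscQuadDeriv (x : ℝ) : ℝ :=
  4 * x + 2 * x * sin (1 / √|x|) - cos (1 / √|x|) * (x / (2 * √|x|))

theorem sq_le_oscQuad (x : ℝ) : x ^ 2 ≤ oscQuad x := by
  unfold oscQuad
  nlinarith [neg_one_le_sin (1 / √|x|), sq_nonneg x]

@[simp] theorem oscQuad_zero : oscQuad 0 = 0 := by simp [oscQuad]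

theorem abs_oscQuad_le (x : ℝ) : |oscQuad x| ≤ 3 * x ^ 2 := by
  unfold oscQuad
  rw [abs_le]
  constructor <;> nlinarith [neg_one_le_sin (1 / √|x|), sin_le_one (1 / √|x|), sq_nonneg x]

theorem hasDerivAt_one_div_sqrt_abs {x : ℝ} (hx : x ≠ 0) :
    HasDerivAt (fun y => 1 / √|y|) (-x / (2 * √|x| * x ^ 2)) x := by
  have hsqrt := (hasDerivAt_sqrt (abs_ne_zero.2 hx)).comp x (hasDerivAt_abs hx)
  refine ((hasDerivAt_const x (1 : ℝ)).div hsqrt (sqrt_ne_zero'.2 (abs_pos.2 hx))).congr_deriv ?_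
  have hsign : (SignType.sign x : ℝ) = x / |x| := by
    rw [eq_div_iff (abs_ne_zero.2 hx), sign_mul_abs]
  simp only [Function.comp_apply, sq_sqrt (abs_nonneg x), hsign]
  field_simp
  rw [sq_abs]
  ring

theorem hasDerivAt_oscQuad_of_ne_zero {x : ℝ} (hx : x ≠ 0) :
    HasDerivAt oscQuad (oscQuadDeriv x) x := by
  have hsq : HasDerivAt (fun y : ℝ => y ^ 2) (2 * x) x := by simpa using hasDerivAt_pow 2 x
  refine ((hsq.const_mul 2).add (hsq.mul (hasDerivAt_one_div_sqrt_abs hx).sin)).congr_deriv ?_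
  unfold oscQuadDeriv
  field_simp
  ring

theorem hasDerivAt_oscQuad_zero : HasDerivAt oscQuad 0 0 := by
  rw [hasDerivAt_iff_isLittleO_nhds_zero]
  have hO : oscQuad =O[𝓝 0] fun h : ℝ => h ^ 2 :=
    Asymptotics.IsBigO.of_bound 3 (Eventually.of_forall fun h => by
      simpa [abs_of_nonneg (sq_nonneg h)] using abs_oscQuad_le h)
  simpa only [oscQuad_zero, zero_add, smul_zero, sub_zero] using
    hO.trans_isLittleO (Asymptotics.isLittleO_pow_id one_lt_two)

theorem hasDerivAt_oscQuad (x : ℝ) : HasDerivAt oscQuad (oscQuadDeriv x) x := by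
  rcases eq_or_ne x 0 with rfl | hx
  · simpa [oscQuadDeriv] using hasDerivAt_oscQuad_zero
  · exact hasDerivAt_oscQuad_of_ne_zero hx

theorem deriv_oscQuad : deriv oscQuad = oscQuadDeriv :=
  funext fun x => (hasDerivAt_oscQuad x).deriv

theorem abs_oscQuadDeriv_le (x : ℝ) : |oscQuadDeriv x| ≤ 6 * |x| + √|x| / 2 := by
  have hfrac : |x / (2 * √|x|)| = √|x| / 2 := by
    rw [abs_div, abs_mul, abs_two, abs_of_nonneg (sqrt_nonneg _), mul_comm, ← div_div, div_sqrt]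
  have hcos : |cos (1 / √|x|) * (x / (2 * √|x|))| ≤ √|x| / 2 := by
    rw [abs_mul, hfrac]
    exact mul_le_of_le_one_left (by positivity) (abs_cos_le_one _)
  have hsin : |2 * x * sin (1 / √|x|)| ≤ 2 * |x| := by
    rw [abs_mul, abs_mul, abs_two]
    exact mul_le_of_le_one_right (by positivity) (abs_sin_le_one _)
  unfold oscQuadDeriv
  rw [abs_le] at hcos hsin ⊢
  constructor <;> linarith [le_abs_self x, neg_abs_le x]

theorem continuous_oscQuadDeriv : Continuous oscQuadDeriv := by
  refine continuous_iff_continuousAt.2 fun x => ?_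
  rcases eq_or_ne x 0 with rfl | hx
  · have hbound : Tendsto (fun x : ℝ => 6 * |x| + √|x| / 2) (𝓝 0) (𝓝 0) := by
      have : Continuous fun x : ℝ => 6 * |x| + √|x| / 2 := by fun_prop
      simpa using this.tendsto 0
    simpa [ContinuousAt, oscQuadDeriv] using squeeze_zero_norm abs_oscQuadDeriv_le hbound
  · unfold oscQuadDeriv
    fun_prop (disch := positivity)

theorem contDiff_oscQuad : ContDiff ℝ 1 oscQuad :=
  contDiff_one_iff_deriv.2 ⟨fun x => (hasDerivAt_oscQuad x).differentiableAt,
    deriv_oscQuad ▸ continuous_oscQuadDeriv⟩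

theorem oscQuadDeriv_inv_sq {t : ℝ} (ht : 0 < t) :
    oscQuadDeriv (t ^ 2)⁻¹ = 4 / t ^ 2 + 2 / t ^ 2 * sin t - cos t / (2 * t) := by
  rw [oscQuadDeriv, abs_of_pos (by positivity), sqrt_inv, sqrt_sq ht.le, one_div, inv_inv]
  field_simp

theorem oscQuadDeriv_inv_sq_neg {t : ℝ} (ht : 8 < t) (hcos : cos t = 1) :
    oscQuadDeriv (t ^ 2)⁻¹ < 0 := by
  have hsin : sin t = 0 := sin_eq_zero_iff_cos_eq.2 (Or.inl hcos)
  rw [oscQuadDeriv_inv_sq (by linarith), hsin, hcos,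
    show 4 / t ^ 2 + 2 / t ^ 2 * 0 - 1 / (2 * t) = (8 - t) / (2 * t ^ 2) by field_simp; ring]
  exact div_neg_of_neg_of_pos (by linarith) (by positivity)

theorem oscQuadDeriv_inv_sq_pos {t : ℝ} (ht : 0 < t) (hcos : cos t = -1) :
    0 < oscQuadDeriv (t ^ 2)⁻¹ := by
  have hsin : sin t = 0 := sin_eq_zero_iff_cos_eq.2 (Or.inr hcos)
  rw [oscQuadDeriv_inv_sq ht, hsin, hcos, mul_zero, add_zero, neg_div, sub_neg_eq_add]
  positivity

theorem exists_oscQuadDeriv_eq_zero_of_cos_eq_one {t : ℝ} (ht : 8 < t) (hcos : cos t = 1) :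
    ∃ x ∈ Ioc 0 (t ^ 2)⁻¹, oscQuadDeriv x = 0 := by
  have hle : ((t + π) ^ 2)⁻¹ ≤ (t ^ 2)⁻¹ := by
    gcongr
    linarith [pi_pos]
  obtain ⟨x, hx, hx0⟩ := intermediate_value_Icc' hle continuous_oscQuadDeriv.continuousOn
    ⟨(oscQuadDeriv_inv_sq_neg ht hcos).le,
      (oscQuadDeriv_inv_sq_pos (by linarith [pi_pos]) (by rw [cos_add_pi, hcos])).le⟩
  exact ⟨x, ⟨(by positivity : (0 : ℝ) < ((t + π) ^ 2)⁻¹).trans_le hx.1, hx.2⟩, hx0⟩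

theorem frequently_oscQuadDeriv_eq_zero : ∃ᶠ x in 𝓝[>] 0, oscQuadDeriv x = 0 := by
  refine (nhdsGT_basis 0).frequently_iff.2 fun ε hε => ?_
  have ht : Tendsto (fun n : ℕ => n * (2 * π)) atTop atTop :=
    tendsto_natCast_atTop_atTop.atTop_mul_const two_pi_pos
  have hinv : Tendsto (fun n : ℕ => ((n * (2 * π)) ^ 2)⁻¹) atTop (𝓝 0) :=
    tendsto_inv_atTop_zero.comp ((tendsto_pow_atTop two_ne_zero).comp ht)
  obtain ⟨n, hn8, hnε⟩ :=
    ((ht.eventually_gt_atTop 8).and (hinv.eventually (Iio_mem_nhds hε))).exists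
  obtain ⟨x, hx, hx0⟩ := exists_oscQuadDeriv_eq_zero_of_cos_eq_one hn8 (cos_nat_mul_two_pi n)
  exact ⟨x, ⟨hx.1, hx.2.trans_lt hnε⟩, hx0⟩

theorem frequently_deriv_oscQuad_eq_zero_and_pos :
    ∃ᶠ x in 𝓝[>] 0, deriv oscQuad x = 0 ∧ 0 < oscQuad x :=
  frequently_oscQuadDeriv_eq_zero.mp <| eventually_mem_nhdsWithin.mono fun x hx hx0 =>
    ⟨deriv_oscQuad ▸ hx0, (pow_pos hx 2).trans_le (sq_le_oscQuad x)⟩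

theorem isLocalMin_oscQuad_zero : IsLocalMin oscQuad 0 :=
  Eventually.of_forall fun x => by
    simpa only [oscQuad_zero] using (sq_nonneg x).trans (sq_le_oscQuad x)

/-- The C¹ function `f(x) = 2x² + x²·sin(1/√|x|)` (with `f(0) = 0`, as given by the Lean
conventions `√0 = 0`, `1/0 = 0`, `sin 0 = 0`) satisfies quadratic growth at its global
minimum `0` (indeed `f(x) ≥ x²`), yet has critical points of positive value arbitrarily
close to `0`; hence it satisfies neither PL nor the error bound around `0`. -/
theorem qg_not_pl_counterexample :
    letI f : ℝ → ℝ := fun x => 2 * x ^ 2 + x ^ 2 * Real.sin (1 / Real.sqrt |x|)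
    letI S : Set ℝ := {y | IsLocalMin f y ∧ f y = 0}
    ContDiff ℝ 1 f ∧
    (∀ x : ℝ, x ^ 2 ≤ f x) ∧
    (∀ ε > (0 : ℝ), ∃ x : ℝ, x ≠ 0 ∧ |x| < ε ∧ deriv f x = 0 ∧ 0 < f x) ∧
    (¬ ∃ C : ℝ, ∀ᶠ x in 𝓝 (0 : ℝ), f x ≤ C * (deriv f x) ^ 2) ∧
    (¬ ∃ μ : ℝ, 0 < μ ∧ ∀ᶠ x in 𝓝 (0 : ℝ), μ * Metric.infDist x S ≤ |deriv f x|) := by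
  have hcrit := frequently_deriv_oscQuad_eq_zero_and_pos
  have hcrit₀ := hcrit.filter_mono nhdsWithin_le_nhds
  refine ⟨contDiff_oscQuad, sq_le_oscQuad, fun ε hε => ?_, hcrit₀.not_polyakLojasiewicz,
    hcrit₀.not_errorBound ⟨0, isLocalMin_oscQuad_zero, oscQuad_zero⟩
      contDiff_oscQuad.continuous fun y hy => hy.2⟩
  obtain ⟨x, hx, hcritx⟩ := (nhdsGT_basis 0).frequently_iff.1 hcrit ε hε
  exact ⟨x, hx.1.ne', (abs_of_pos hx.1).trans_lt hx.2, hcritx⟩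
end

section
/- The function f : ℝ² → ℝ defined by f(x,y) = x²y²/(x²+y²) for (x,y) ≠ (0,0) and f(0,0) = 0 is C¹, satisfies a PL inequality around the origin, and its set of global minimizers {(x,y) : xy = 0} is the union of the two coordinate axes, which is not a C⁰ submanifold at the origin. -/
/-!
Write `r² = x² + y²`. Since `f ≤ r² / 4`, `f` is differentiable at the origin with derivative `0`;
away from it the partial derivatives `2xy⁴/r⁴` and `2x⁴y/r⁴` are bounded by `2|x|` and `2|y|`,
so they tend to `0` and `f` is `C¹`. With `μ = 1/2` the PL inequality becomes
`(x² + y²)³ ≤ 4 (x⁶ + y⁶)`. As `f ≥ 0` vanishes exactly on the axes, these are its minimizers.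

The axes are not locally Euclidean at `0`: every punctured neighbourhood of `0` in them meets
three pairwise disjoint open sets (the two half-lines of the `x`-axis and the punctured `y`-axis)
that cover it, while a punctured ball of `ℝᵈ` is the union of two preconnected sets, the ball minus
either of two opposite half-lines issuing from the centre, each star-shaped. In `ℝ⁰` there is
nothing to puncture.
-/

open Metric Filter Topology Set Function

lemma setOf_forall_le_eq_setOf_eq_zero {X : Type*} {g : X → ℝ} (hg : ∀ x, 0 ≤ g x) {x₀ : X}
    (hx₀ : g x₀ = 0) : {x | ∀ y, g x ≤ g y} = {x | g x = 0} := by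
  ext x
  exact ⟨fun h => le_antisymm (hx₀ ▸ h x₀) (hg x), fun h y => h ▸ hg y⟩

lemma HasFDerivAt.gradient_apply {ι : Type*} [Fintype ι] [DecidableEq ι]
    {g : EuclideanSpace ℝ ι → ℝ} {D : EuclideanSpace ℝ ι →L[ℝ] ℝ} {p : EuclideanSpace ℝ ι}
    (h : HasFDerivAt g D p) (i : ι) : gradient g p i = D (EuclideanSpace.single i 1) := by
  rw [h.hasGradientAt.gradient, ← InnerProductSpace.toDual_symm_apply,
    EuclideanSpace.inner_single_right]
  simp

def HasThreeBranchesAt {X : Type*} [TopologicalSpace X] (x : X) : Prop :=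
  ∃ O : Fin 3 → Set X, (∀ i, IsOpen (O i)) ∧ Pairwise (Disjoint on O) ∧
    (∀ i, x ∈ closure (O i)) ∧ ∀ᶠ y in 𝓝[≠] x, y ∈ ⋃ i, O i

lemma HasThreeBranchesAt.image_of_isOpenEmbedding {X Y : Type*} [TopologicalSpace X]
    [TopologicalSpace Y] {x : X} {ι : X → Y} (hx : HasThreeBranchesAt x)
    (hι : IsOpenEmbedding ι) : HasThreeBranchesAt (ι x) := by
  obtain ⟨O, hO, hdisj, hcl, hcover⟩ := hx
  refine ⟨fun i => ι '' O i, fun i => hι.isOpenMap _ (hO i),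
    fun i j hij => disjoint_image_of_injective hι.injective (hdisj hij), fun i => ?_, ?_⟩
  · exact mem_closure_image hι.continuous.continuousAt (hcl i)
  · rw [eventually_nhdsWithin_iff] at hcover ⊢
    filter_upwards [hι.isOpenMap.image_mem_nhds hcover]
    rintro _ ⟨y, hy, rfl⟩ hne
    obtain ⟨i, hi⟩ := mem_iUnion.1 (hy fun h => hne (congrArg ι h))
    exact mem_iUnion.2 ⟨i, y, hi, rfl⟩

lemma IsPreconnected.subset_of_subset_iUnion {X ι : Type*} [TopologicalSpace X]
    {s : Set X} {O : ι → Set X} (hs : IsPreconnected s) (hO : ∀ i, IsOpen (O i))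
    (hdisj : Pairwise (Disjoint on O)) (hsO : s ⊆ ⋃ i, O i) {i : ι} (hi : (s ∩ O i).Nonempty) :
    s ⊆ O i := by
  refine hs.subset_left_of_subset_union (hO i) (isOpen_biUnion fun k _ => hO k)
    (disjoint_iUnion₂_right.2 fun k hk => hdisj (Ne.symm hk)) (fun y hy => ?_) hi
  obtain ⟨k, hk⟩ := mem_iUnion.1 (hsO hy)
  rcases eq_or_ne k i with rfl | hki
  exacts [.inl hk, .inr (mem_iUnion₂.2 ⟨k, hki, hk⟩)]

lemma not_forall_exists_inter_nonempty_of_isPreconnected {X : Type*} [TopologicalSpace X]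
    {O : Fin 3 → Set X} {C : Fin 2 → Set X} (hO : ∀ i, IsOpen (O i))
    (hdisj : Pairwise (Disjoint on O)) (hC : ∀ j, IsPreconnected (C j))
    (hCO : ∀ j, C j ⊆ ⋃ i, O i) : ¬ ∀ i, ∃ j, (C j ∩ O i).Nonempty := by
  intro hmeet
  choose j hj using hmeet
  have hsub (i : Fin 3) : C (j i) ⊆ O i := (hC _).subset_of_subset_iUnion hO hdisj (hCO _) (hj i)
  obtain ⟨i, i', hne, heq⟩ := Fintype.exists_ne_map_eq_of_card_lt j (by simp)
  obtain ⟨y, hy, -⟩ := hj i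
  exact (hdisj hne).ne_of_mem (hsub i hy) (hsub i' (heq ▸ hy)) rfl

section NormedSpace

variable {E : Type*} [NormedAddCommGroup E] [NormedSpace ℝ E]

def halfLine (z v : E) : Set E := (fun t : ℝ => z + t • v) '' Ici 0

lemma self_mem_halfLine (z v : E) : z ∈ halfLine z v := ⟨0, mem_Ici.2 le_rfl, by simp⟩

lemma halfLine_inter_halfLine_neg_subset {v : E} (hv : v ≠ 0) (z : E) :
    halfLine z v ∩ halfLine z (-v) ⊆ {z} := by
  rintro _ ⟨⟨s, hs, rfl⟩, ⟨t, ht, hst⟩⟩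
  have hsum : (s + t) • v = 0 := by
    rw [add_smul]
    linear_combination (norm := module) hst.symm
  have hs0 : s = 0 := by
    linarith [mem_Ici.1 hs, mem_Ici.1 ht, (smul_eq_zero.1 hsum).resolve_right hv]
  simp [hs0]

lemma starConvex_ball_diff_halfLine {z v : E} {r : ℝ} (hv : v ≠ 0) (hvr : ‖v‖ < r) :
    StarConvex ℝ (z - v) (ball z r \ halfLine z v) := by
  have hzv : z - v ∈ ball z r := by simpa [dist_eq_norm] using hvr
  rintro y ⟨hy, hyv⟩ a b ha hb hab
  refine ⟨convex_ball z r hzv hy ha hb hab, ?_⟩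
  rintro ⟨t, ht, hteq⟩
  have key : b • (y - z) = (t + a) • v := by
    linear_combination (norm := module) -hteq - hab • z
  rcases hb.eq_or_lt with rfl | hb
  · have : t + a = 0 := by simpa [hv] using key.symm
    linarith [mem_Ici.1 ht]
  · refine hyv ⟨(t + a) / b, div_nonneg (by linarith [mem_Ici.1 ht]) hb.le, ?_⟩
    change z + _ • v = y
    rw [div_eq_inv_mul, mul_smul, ← key, smul_smul, inv_mul_cancel₀ hb.ne', one_smul,
      add_sub_cancel]

lemma isPreconnected_ball_diff_halfLine {z v : E} {r : ℝ} (hv : v ≠ 0) (hvr : ‖v‖ < r) :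
    IsPreconnected (ball z r \ halfLine z v) := by
  have hmem : z - v ∈ ball z r \ halfLine z v := by
    refine ⟨by simpa [dist_eq_norm] using hvr, fun h => hv ?_⟩
    have hneg : z - v ∈ halfLine z (-v) := ⟨1, mem_Ici.2 zero_le_one, by simp [sub_eq_add_neg]⟩
    simpa using halfLine_inter_halfLine_neg_subset hv z ⟨h, hneg⟩
  exact ((starConvex_ball_diff_halfLine hv hvr).isPathConnected hmem).isConnected.isPreconnected

lemma not_hasThreeBranchesAt (z : E) : ¬ HasThreeBranchesAt z := by
  rintro ⟨O, hO, hdisj, hcl, hcover⟩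
  obtain ⟨r, hr, hball⟩ := Metric.eventually_nhds_iff_ball.1 (eventually_nhdsWithin_iff.1 hcover)
  have hnotMem (i : Fin 3) : z ∉ O i := fun hz => by
    obtain ⟨j, hji⟩ := exists_ne i
    obtain ⟨y, hyi, hyj⟩ := mem_closure_iff.1 (hcl j) _ (hO i) hz
    exact (hdisj hji).ne_of_mem hyj hyi rfl
  have hmeet (i : Fin 3) : ∃ y ∈ ball z r \ {z}, y ∈ O i := by
    obtain ⟨y, hy, hyz⟩ := Metric.mem_closure_iff.1 (hcl i) r hr
    exact ⟨y, ⟨by rwa [mem_ball, dist_comm], fun h => hnotMem i (h ▸ hy)⟩, hy⟩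
  obtain ⟨y, ⟨hyr, hyz⟩, -⟩ := hmeet 0
  set v := (1 / 2 : ℝ) • (y - z)
  have hv : v ≠ 0 := smul_ne_zero (by norm_num) (sub_ne_zero.2 hyz)
  have hvr : ‖v‖ < r := by
    rw [mem_ball, dist_eq_norm] at hyr
    rw [norm_smul, Real.norm_of_nonneg (by norm_num)]
    linarith [norm_nonneg (y - z)]
  let C : Fin 2 → Set E := ![ball z r \ halfLine z v, ball z r \ halfLine z (-v)]
  have hC : ∀ j, IsPreconnected (C j) := Fin.forall_fin_two.2
    ⟨isPreconnected_ball_diff_halfLine hv hvr,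
      isPreconnected_ball_diff_halfLine (neg_ne_zero.2 hv) (by rwa [norm_neg])⟩
  have hCsub : ∀ j, C j ⊆ ball z r \ {z} := Fin.forall_fin_two.2
    ⟨sdiff_subset_sdiff_right (singleton_subset_iff.2 (self_mem_halfLine z v)),
      sdiff_subset_sdiff_right (singleton_subset_iff.2 (self_mem_halfLine z (-v)))⟩
  have hsubC : ball z r \ {z} ⊆ C 0 ∪ C 1 := by
    rintro w ⟨hw, hwz⟩
    by_contra h
    simp only [C, mem_union, Matrix.cons_val_zero, Matrix.cons_val_one, Set.mem_sdiff, not_or,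
      not_and, not_not] at h
    exact hwz (halfLine_inter_halfLine_neg_subset hv z ⟨h.1 hw, h.2 hw⟩)
  refine not_forall_exists_inter_nonempty_of_isPreconnected hO hdisj hC
    (fun j w hw => hball w (hCsub j hw).1 (hCsub j hw).2) fun i => ?_
  obtain ⟨w, hw, hwi⟩ := hmeet i
  rcases hsubC hw with h | h
  exacts [⟨0, w, h, hwi⟩, ⟨1, w, h, hwi⟩]

end NormedSpace

noncomputable def crossFun (x y : ℝ) : ℝ := x ^ 2 * y ^ 2 / (x ^ 2 + y ^ 2)

noncomputable def crossPartial (x y : ℝ) : ℝ := 2 * x * y ^ 4 / (x ^ 2 + y ^ 2) ^ 2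

lemma crossFun_nonneg (x y : ℝ) : 0 ≤ crossFun x y := by
  unfold crossFun; positivity

lemma crossFun_eq_zero_iff {x y : ℝ} : crossFun x y = 0 ↔ x = 0 ∨ y = 0 := by
  unfold crossFun
  constructor
  · intro h
    rcases div_eq_zero_iff.1 h with h | h
    · simpa using h
    · exact .inl (by nlinarith [sq_nonneg x, sq_nonneg y])
  · rintro (rfl | rfl) <;> simp

lemma crossFun_le (x y : ℝ) : crossFun x y ≤ (x ^ 2 + y ^ 2) / 4 := by
  unfold crossFun
  rcases (add_nonneg (sq_nonneg x) (sq_nonneg y)).eq_or_lt with h | h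
  · rw [← h]; simp
  · rw [div_le_div_iff₀ h (by norm_num)]
    nlinarith [sq_nonneg (x ^ 2 - y ^ 2)]

lemma abs_crossPartial_le (x y : ℝ) : |crossPartial x y| ≤ 2 * |x| := by
  have hy : y ^ 4 / (x ^ 2 + y ^ 2) ^ 2 ≤ 1 :=
    div_le_one_of_le₀ (by nlinarith [sq_nonneg (x ^ 2), mul_nonneg (sq_nonneg x) (sq_nonneg y)])
      (by positivity)
  calc |crossPartial x y| = 2 * |x| * (y ^ 4 / (x ^ 2 + y ^ 2) ^ 2) := by
        rw [crossPartial, mul_div_assoc, abs_mul, abs_mul, abs_two,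
          abs_of_nonneg (by positivity : 0 ≤ y ^ 4 / (x ^ 2 + y ^ 2) ^ 2)]
    _ ≤ 2 * |x| := mul_le_of_le_one_right (by positivity) hy

lemma continuous_crossPartial : Continuous fun q : ℝ × ℝ => crossPartial q.1 q.2 := by
  rw [continuous_iff_continuousAt]
  rintro ⟨x, y⟩
  by_cases h : x ^ 2 + y ^ 2 = 0
  · have hx : x = 0 := by nlinarith [sq_nonneg x, sq_nonneg y]
    have hy : y = 0 := by nlinarith [sq_nonneg x, sq_nonneg y]
    subst hx hy
    have hlim : Tendsto (fun q : ℝ × ℝ => 2 * |q.1|) (𝓝 (0, 0)) (𝓝 0) := by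
      simpa using ((continuous_abs.comp continuous_fst).const_mul 2).tendsto ((0 : ℝ), (0 : ℝ))
    have : crossPartial 0 0 = 0 := by simp [crossPartial]
    rw [ContinuousAt, this]
    exact squeeze_zero_norm (fun q => abs_crossPartial_le q.1 q.2) hlim
  · unfold crossPartial
    fun_prop (disch := exact pow_ne_zero 2 h)

lemma crossFun_le_partial_sq (x y : ℝ) :
    crossFun x y ≤ crossPartial x y ^ 2 + crossPartial y x ^ 2 := by
  unfold crossFun crossPartial
  simp only [add_comm (y ^ 2)]
  rcases (add_nonneg (sq_nonneg x) (sq_nonneg y)).eq_or_lt with h | h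
  · simp [← h]
  · set r := x ^ 2 + y ^ 2
    have key : (2 * x * y ^ 4 / r ^ 2) ^ 2 + (2 * y * x ^ 4 / r ^ 2) ^ 2 =
        x ^ 2 * y ^ 2 / r * (4 * ((x ^ 2) ^ 3 + (y ^ 2) ^ 3) / r ^ 3) := by
      field_simp; ring
    rw [key]
    refine le_mul_of_one_le_right (by positivity) ?_
    rw [one_le_div (by positivity)]
    nlinarith [mul_nonneg h.le (sq_nonneg (x ^ 2 - y ^ 2))]

local notation "E2" => EuclideanSpace ℝ (Fin 2)

lemma sq_norm_euclideanSpace_fin_two (p : E2) : ‖p‖ ^ 2 = p 0 ^ 2 + p 1 ^ 2 := by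
  simp [EuclideanSpace.norm_sq_eq, Fin.sum_univ_two]

-- At `p = 0` both coefficients are `0 / 0 = 0`, which is the derivative there.
noncomputable def crossDeriv (p : E2) : E2 →L[ℝ] ℝ :=
  crossPartial (p 0) (p 1) • EuclideanSpace.proj (0 : Fin 2) +
    crossPartial (p 1) (p 0) • EuclideanSpace.proj (1 : Fin 2)

lemma continuous_crossDeriv : Continuous crossDeriv := by
  have h0 : Continuous fun p : E2 => p 0 := by fun_prop
  have h1 : Continuous fun p : E2 => p 1 := by fun_prop
  exact ((continuous_crossPartial.comp (h0.prodMk h1)).smul continuous_const).add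
    ((continuous_crossPartial.comp (h1.prodMk h0)).smul continuous_const)

lemma hasFDerivAt_crossFun_zero :
    HasFDerivAt (fun p : E2 => crossFun (p 0) (p 1)) (0 : E2 →L[ℝ] ℝ) 0 := by
  refine Asymptotics.IsBigO.hasFDerivAt (n := 2) ?_ one_lt_two
  refine Asymptotics.IsBigO.of_bound 1 (Eventually.of_forall fun p => ?_)
  rw [sub_zero, norm_pow, norm_norm, sq_norm_euclideanSpace_fin_two,
    Real.norm_of_nonneg (crossFun_nonneg _ _)]
  linarith [crossFun_le (p 0) (p 1), add_nonneg (sq_nonneg (p 0)) (sq_nonneg (p 1))]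

lemma hasFDerivAt_crossFun (p : E2) :
    HasFDerivAt (fun p : E2 => crossFun (p 0) (p 1)) (crossDeriv p) p := by
  rcases eq_or_ne p 0 with rfl | hp
  · convert hasFDerivAt_crossFun_zero
    ext v
    simp [crossDeriv, crossPartial]
  have hr : p 0 ^ 2 + p 1 ^ 2 ≠ 0 := by
    rw [← sq_norm_euclideanSpace_fin_two]; positivity
  have h0 := (EuclideanSpace.proj (𝕜 := ℝ) (0 : Fin 2)).hasFDerivAt (x := p)
  have h1 := (EuclideanSpace.proj (𝕜 := ℝ) (1 : Fin 2)).hasFDerivAt (x := p)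
  have hinv := (hasDerivAt_inv hr).comp_hasFDerivAt p ((h0.pow 2).add (h1.pow 2))
  refine ((((h0.pow 2).mul (h1.pow 2)).mul hinv).congr_fderiv ?_).congr_of_eventuallyEq
    (Eventually.of_forall fun q => ?_)
  · ext v
    simp only [crossDeriv, crossPartial, add_comm (p 1 ^ 2), PiLp.proj_apply, Pi.mul_apply,
      Nat.add_one_sub_one, pow_one, nsmul_eq_mul, Nat.cast_ofNat, smul_add, neg_smul, smul_neg,
      comp_apply, Pi.add_apply, add_apply, neg_apply, smul_apply, smul_eq_mul]
    field_simp
    ring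
  · simp [crossFun, div_eq_mul_inv]

lemma crossFun_le_norm_gradient_sq (p : E2) :
    crossFun (p 0) (p 1) ≤ ‖gradient (fun p : E2 => crossFun (p 0) (p 1)) p‖ ^ 2 := by
  have h := hasFDerivAt_crossFun p
  rw [sq_norm_euclideanSpace_fin_two, h.gradient_apply, h.gradient_apply]
  simpa [crossDeriv] using crossFun_le_partial_sq (p 0) (p 1)

lemma setOf_forall_crossFun_le :
    {p : E2 | ∀ q : E2, crossFun (p 0) (p 1) ≤ crossFun (q 0) (q 1)} =
      {p | p 0 = 0 ∨ p 1 = 0} := by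
  rw [setOf_forall_le_eq_setOf_eq_zero (g := fun p : E2 => crossFun (p 0) (p 1))
    (fun p => crossFun_nonneg (p 0) (p 1)) (x₀ := 0) (by simp [crossFun])]
  ext p
  exact crossFun_eq_zero_iff

lemma hasThreeBranchesAt_zero_axes {U : Set E2} (hU : U ∈ 𝓝 0)
    (h0 : (0 : E2) ∈ {p : E2 | p 0 = 0 ∨ p 1 = 0} ∩ U) :
    HasThreeBranchesAt (⟨0, h0⟩ : ↥({p : E2 | p 0 = 0 ∨ p 1 = 0} ∩ U)) := by
  have hcoord (i : Fin 2) : Continuous fun t : ↥({p : E2 | p 0 = 0 ∨ p 1 = 0} ∩ U) => (t : E2) i :=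
    by fun_prop
  have hray (c : E2) (hc : c 0 = 0 ∨ c 1 = 0) (l : Filter ℝ) [l.NeBot] (hl : l ≤ 𝓝 0)
      (P : Set E2) (hP : ∀ᶠ s in l, s • c ∈ P) :
      (⟨0, h0⟩ : ↥({p : E2 | p 0 = 0 ∨ p 1 = 0} ∩ U)) ∈ closure (Subtype.val ⁻¹' P) := by
    rw [closure_subtype, Subtype.image_preimage_coe]
    have hγ : Tendsto (fun s : ℝ => s • c) l (𝓝 0) := by
      simpa using (tendsto_id'.2 hl).smul_const c
    refine mem_closure_of_tendsto hγ ?_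
    filter_upwards [hγ hU, hP] with s hsU hsP
    refine ⟨⟨?_, hsU⟩, hsP⟩
    rcases hc with hc | hc <;> simp [hc]
  refine ⟨![Subtype.val ⁻¹' {p | 0 < p 0}, Subtype.val ⁻¹' {p | p 0 < 0},
    Subtype.val ⁻¹' {p | p 1 ≠ 0}], ?_, ?_, ?_, ?_⟩
  · intro i
    fin_cases i
    exacts [isOpen_lt continuous_const (hcoord 0), isOpen_lt (hcoord 0) continuous_const,
      isOpen_ne_fun (hcoord 1) continuous_const]
  · intro i j hij
    rw [onFun, Set.disjoint_left]
    rintro ⟨p, hp | hp, -⟩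
    all_goals fin_cases i <;> fin_cases j <;> simp [hp] at hij ⊢ <;> intros <;> linarith
  · intro i
    fin_cases i
    · exact hray (EuclideanSpace.single 0 1) (.inr (by simp)) (𝓝[>] 0) nhdsWithin_le_nhds _
        (by filter_upwards [self_mem_nhdsWithin] with s hs; simpa using hs)
    · exact hray (EuclideanSpace.single 0 1) (.inr (by simp)) (𝓝[<] 0) nhdsWithin_le_nhds _
        (by filter_upwards [self_mem_nhdsWithin] with s hs; simpa using hs)
    · exact hray (EuclideanSpace.single 1 1) (.inl (by simp)) (𝓝[>] 0) nhdsWithin_le_nhds _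
        (by filter_upwards [self_mem_nhdsWithin] with s hs; simpa using hs.ne')
  · refine eventually_nhdsWithin_of_forall ?_
    rintro ⟨p, hp, _⟩ hne
    have hp1 : p 0 ≠ 0 ∨ p 1 ≠ 0 := by
      by_contra! h
      exact hne (Subtype.ext (by ext i; fin_cases i <;> simp [h.1, h.2]))
    rcases hp with h | h
    · exact mem_iUnion.2 ⟨2, by simpa [h] using hp1⟩
    · rcases (hp1.resolve_right (not_not.2 h)).lt_or_gt with h' | h'
      exacts [mem_iUnion.2 ⟨1, by simpa using h'⟩, mem_iUnion.2 ⟨0, by simpa using h'⟩]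

lemma not_exists_homeomorph_axes :
    ¬ ∃ (d : ℕ) (U : Set E2) (V : Set (EuclideanSpace ℝ (Fin d))),
        IsOpen U ∧ (0 : E2) ∈ U ∧ IsOpen V ∧
        Nonempty (↥({p : E2 | p 0 = 0 ∨ p 1 = 0} ∩ U) ≃ₜ ↥V) := by
  rintro ⟨d, U, V, hU, h0U, hV, ⟨e⟩⟩
  have h0 : (0 : E2) ∈ {p : E2 | p 0 = 0 ∨ p 1 = 0} ∩ U := ⟨.inl rfl, h0U⟩
  exact not_hasThreeBranchesAt _
    ((hasThreeBranchesAt_zero_axes (hU.mem_nhds h0U) h0).image_of_isOpenEmbedding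
      (hV.isOpenEmbedding_subtypeVal.comp e.isOpenEmbedding))

/-- The C¹ function `f(x,y) = x²y²/(x²+y²)` (with `f(0,0) = 0` by the convention `0/0 = 0`)
satisfies a PL inequality around the origin, its set of global minimizers is the union of
the two coordinate axes, and that set is not a C⁰ submanifold at the origin (no neighborhood
of `0` in it is homeomorphic to an open subset of some `ℝ^d`). -/
theorem pl_cross_counterexample :
    letI f : EuclideanSpace ℝ (Fin 2) → ℝ :=
      fun p => (p 0) ^ 2 * (p 1) ^ 2 / ((p 0) ^ 2 + (p 1) ^ 2)
    letI S : Set (EuclideanSpace ℝ (Fin 2)) := {p | ∀ q, f p ≤ f q}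
    ContDiff ℝ 1 f ∧
    (∃ μ : ℝ, 0 < μ ∧ ∀ᶠ p in 𝓝 (0 : EuclideanSpace ℝ (Fin 2)),
      f p ≤ (1 / (2 * μ)) * ‖gradient f p‖ ^ 2) ∧
    S = {p | p 0 = 0 ∨ p 1 = 0} ∧
    ¬ ∃ (d : ℕ) (U : Set (EuclideanSpace ℝ (Fin 2))) (V : Set (EuclideanSpace ℝ (Fin d))),
        IsOpen U ∧ (0 : EuclideanSpace ℝ (Fin 2)) ∈ U ∧ IsOpen V ∧
        Nonempty (↥(S ∩ U) ≃ₜ ↥V) := by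
  refine ⟨contDiff_one_iff_hasFDerivAt.2 ⟨crossDeriv, continuous_crossDeriv, hasFDerivAt_crossFun⟩,
    ⟨1 / 2, by norm_num, Eventually.of_forall fun p => ?_⟩, setOf_forall_crossFun_le, ?_⟩
  · rw [show (1 : ℝ) / (2 * (1 / 2)) = 1 by norm_num, one_mul]
    exact crossFun_le_norm_gradient_sq p
  · rintro ⟨d, U, V, hU, h0U, hV, ⟨e⟩⟩
    have hSU := congrArg (· ∩ U) setOf_forall_crossFun_le.symm
    exact not_exists_homeomorph_axes ⟨d, U, V, hU, h0U, hV, ⟨(Homeomorph.setCongr hSU).trans e⟩⟩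
end
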